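/- arXiv:1505.07236 — 3 statements merged into one kernel-verified Lean document; each statement's English description precedes it below -/
import Mathlib

section
/- Every self-adjoint extension of S := A|ker(τ) is of the form A_{Π,Θ} for some orthogonal projection Π : h → h and some self-adjoint operator Θ : dom(Θ) ⊆ ran(Π′) → ran(Π), where dom(A_{Π,Θ}) := {u = u₀ + Gφ : u₀ ∈ dom(A), φ ∈ dom(Θ), Π τ u₀ = Θφ} and A_{Π,Θ}u := Au₀ + λ₀ Gφ. Moreover Z_{Π,Θ} is nonempty, ℂ\ℝ ⊆ Z_{Π,Θ} ⊆ ρ(A_{Π,Θ}), and for every z ∈ Z_{Π,Θ} the resolvent is given by the Kreĭn-type formula (−A_{Π,Θ}+z)^{-1} = R_z + G_z Π′ (Θ + Π M_z Π′)^{-1} Π τ R_z. -/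
/-!
STATEMENT 0 (abstract theory of self-adjoint extensions, Theorem `ext` of the paper).

Setting: `H`, `h` complex Hilbert spaces, `A` a self-adjoint operator in `H`,
`τ : dom A → h` continuous w.r.t. the graph norm, surjective, with dense kernel;
`S := A | ker τ`.  For `z ∈ ρ(A)`, `R_z = (-A+z)⁻¹` and `G_z := (τ R_{z̄})'`,
`G := G_{λ₀}` with `λ₀ ∈ ρ(A) ∩ ℝ`, and `M_z := τ (G - G_z)`.

Throughout, the dual `h'` of `h` is identified with `h` via the duality map `J`
(as in the paper, Section 2); under this identification `G_z : h → H`,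
`Π' = Π`, and a self-adjoint operator `Θ : dom Θ ⊆ ran Π' → ran Π` corresponds
to a self-adjoint operator in the Hilbert subspace `ran Π`.

The theorem: every self-adjoint extension `B` of `S` is of the form `A_{Π,Θ}`
(described by its domain `{u₀ + Gφ : Π τ u₀ = Θ φ}` and action
`u₀ + Gφ ↦ A u₀ + λ₀ Gφ`); moreover `Z_{Π,Θ} ≠ ∅`, `ℂ \ ℝ ⊆ Z_{Π,Θ} ⊆ ρ(A_{Π,Θ})`
and the Kreĭn resolvent formula holds on `Z_{Π,Θ}`.
-/

open scoped InnerProductSpace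
open Filter Topology

section
variable {H : Type*} [NormedAddCommGroup H] [InnerProductSpace ℂ H] [CompleteSpace H]

/-- `R` is the (everywhere defined, bounded) resolvent `(-A + z)⁻¹` of `A`. -/
def IsResolvent (A : H →ₗ.[ℂ] H) (z : ℂ) (R : H →L[ℂ] H) : Prop :=
  (∀ x : H, R x ∈ A.domain) ∧
  (∀ (x : H) (hx : R x ∈ A.domain), -(A ⟨R x, hx⟩) + z • R x = x) ∧
  (∀ u : A.domain, R (-(A u) + z • (u : H)) = (u : H))

/-- `z ∈ ρ(A)`. -/
def InResolventSet (A : H →ₗ.[ℂ] H) (z : ℂ) : Prop := ∃ R, IsResolvent A z R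

/-- Self-adjointness of a (densely defined) unbounded operator: symmetry together
with maximality (`dom T* ⊆ dom T` with matching values), i.e. `T = T*`. -/
def IsSelfAdjointPMap (T : H →ₗ.[ℂ] H) : Prop :=
  Dense (T.domain : Set H) ∧
  (∀ u v : T.domain, ⟪T u, (v : H)⟫_ℂ = ⟪(u : H), T v⟫_ℂ) ∧
  (∀ ψ w : H, (∀ u : T.domain, ⟪ψ, T u⟫_ℂ = ⟪w, (u : H)⟫_ℂ) →
    ∃ hψ : ψ ∈ T.domain, T ⟨ψ, hψ⟩ = w)

variable {h : Type*} [NormedAddCommGroup h] [InnerProductSpace ℂ h] [CompleteSpace h]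

/-- Self-adjointness of an operator acting in the (closed) subspace `K` of `h`:
this encodes, after the identification `h' ≃ h`, the notion `Θ = Θ'` for
`Θ : dom Θ ⊆ ran Π' → ran Π` used in the paper. -/
def IsSelfAdjointIn (K : Submodule ℂ h) (Θ : h →ₗ.[ℂ] h) : Prop :=
  Θ.domain ≤ K ∧ (∀ φ : Θ.domain, Θ φ ∈ K) ∧
  (∀ x ∈ K, x ∈ closure (Θ.domain : Set h)) ∧
  (∀ φ ψ : Θ.domain, ⟪Θ φ, (ψ : h)⟫_ℂ = ⟪(φ : h), Θ ψ⟫_ℂ) ∧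
  (∀ ψ ∈ K, ∀ w ∈ K, (∀ φ : Θ.domain, ⟪ψ, Θ φ⟫_ℂ = ⟪w, (φ : h)⟫_ℂ) →
      ∃ hψ : ψ ∈ Θ.domain, Θ ⟨ψ, hψ⟩ = w)

/-- `P` is an orthogonal projection. -/
def IsOrthProjection (P : h →L[ℂ] h) : Prop :=
  IsIdempotentElem P ∧ ∀ x y : h, ⟪P x, y⟫_ℂ = ⟪x, P y⟫_ℂ

/-- `W` is the bounded inverse of `Θ + Π M_z Π'` (from `ran Π` to `ran Π'`,
in the identified picture an operator in `ran P`). -/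
def IsKreinInverse (P : h →L[ℂ] h) (Θ : h →ₗ.[ℂ] h) (Mz : h →L[ℂ] h)
    (W : h →L[ℂ] h) : Prop :=
  (∀ x : h, W (P x) ∈ Θ.domain) ∧
  (∀ (x : h) (hx : W (P x) ∈ Θ.domain), Θ ⟨W (P x), hx⟩ + P (Mz (W (P x))) = P x) ∧
  (∀ φ : Θ.domain, W (Θ φ + P (Mz (φ : h))) = (φ : h))

/-- `z ∈ Z_{Π,Θ}`. -/
def InKreinSet (A : H →ₗ.[ℂ] H) (P : h →L[ℂ] h) (Θ : h →ₗ.[ℂ] h)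
    (M : ℂ → h →L[ℂ] h) (z : ℂ) : Prop :=
  InResolventSet A z ∧ ∃ W : h →L[ℂ] h, IsKreinInverse P Θ (M z) W

set_option linter.unusedSectionVars false
namespace KreinAux

lemma applyA {A : H →ₗ.[ℂ] H} {z : ℂ} {R : H →L[ℂ] H} (hR : IsResolvent A z R)
    (x : H) (hx : R x ∈ A.domain) : A ⟨R x, hx⟩ = z • R x - x := by
  have h := hR.2.1 x hx
  generalize hAu : (↑(A ⟨R x, hx⟩) : H) = w at h ⊢
  linear_combination (norm := module) -h

/-- symmetric bound below: `|Im z| ‖u‖ ≤ ‖-(T u) + z u‖` -/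
lemma bound_below {T : H →ₗ.[ℂ] H}
    (hsymm : ∀ u v : T.domain, ⟪T u, (v : H)⟫_ℂ = ⟪(u : H), T v⟫_ℂ)
    (z : ℂ) (u : T.domain) :
    |z.im| * ‖(u : H)‖ ≤ ‖-(T u) + z • (u : H)‖ := by
  have hreal : (⟪-(T u) + (z.re : ℂ) • (u : H), (u : H)⟫_ℂ).im = 0 := by
    have h1 : ⟪T u, (u : H)⟫_ℂ = ⟪(u : H), T u⟫_ℂ := hsymm u u
    rw [← inner_conj_symm ((u : H)) (T u)] at h1
    have him : (⟪T u, (u : H)⟫_ℂ).im = 0 := by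
      have h2 := congrArg Complex.im h1
      rw [Complex.conj_im] at h2
      linarith
    rw [inner_add_left, inner_neg_left, inner_smul_left]
    simp [Complex.add_im, Complex.neg_im, Complex.mul_im, Complex.conj_ofReal,
      Complex.ofReal_im, Complex.ofReal_re, inner_self_im, him]
    exact Or.inr (by rw [← Complex.ofReal_pow, Complex.ofReal_im])
  have hz : z • (u : H) = (z.re : ℂ) • (u : H) + ((z.im : ℂ) * Complex.I) • (u : H) := by
    rw [← add_smul]
    congr 1
    simp [Complex.ext_iff]
  have hsplit : -(T u) + z • (u : H)
      = (-(T u) + (z.re : ℂ) • (u : H)) + ((z.im : ℂ) * Complex.I) • (u : H) := by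
    rw [hz]; abel
  set a := -(T u) + (z.re : ℂ) • (u : H) with ha
  have hcross : RCLike.re (⟪a, ((z.im : ℂ) * Complex.I) • (u : H)⟫_ℂ) = 0 := by
    rw [inner_smul_right]
    have : ((z.im : ℂ) * Complex.I * ⟪a, (u : H)⟫_ℂ).re = 0 := by
      rw [Complex.mul_re]
      simp [Complex.mul_re, Complex.mul_im, hreal]
    simpa using this
  have hsq : ‖-(T u) + z • (u : H)‖ ^ 2
      = ‖a‖ ^ 2 + (|z.im| * ‖(u : H)‖) ^ 2 := by
    rw [hsplit, norm_add_sq (𝕜 := ℂ), hcross]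
    have : ‖((z.im : ℂ) * Complex.I) • (u : H)‖ = |z.im| * ‖(u : H)‖ := by
      rw [norm_smul]
      simp [Complex.norm_real]
    rw [this]; ring
  have h1 : (|z.im| * ‖(u : H)‖) ^ 2 ≤ ‖-(T u) + z • (u : H)‖ ^ 2 := by
    rw [hsq]; nlinarith [sq_nonneg ‖a‖]
  exact le_of_pow_le_pow_left₀ two_ne_zero (norm_nonneg _) h1

lemma eq_zero_of_eigen_nonreal {T : H →ₗ.[ℂ] H}
    (hsymm : ∀ u v : T.domain, ⟪T u, (v : H)⟫_ℂ = ⟪(u : H), T v⟫_ℂ)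
    {z : ℂ} (hz : z.im ≠ 0) (u : T.domain) (hu : -(T u) + z • (u : H) = 0) :
    (u : H) = 0 := by
  have hb := bound_below hsymm z u
  rw [hu] at hb
  simp only [norm_zero] at hb
  have : |z.im| * ‖(u : H)‖ = 0 := le_antisymm hb (by positivity)
  rcases mul_eq_zero.1 this with h | h
  · exact absurd (abs_eq_zero.1 h) hz
  · exact norm_eq_zero.1 h


lemma adjoint_isResolvent {A : H →ₗ.[ℂ] H} (hA : IsSelfAdjointPMap A) {z : ℂ} {R : H →L[ℂ] H}
    (hR : IsResolvent A z R) :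
    IsResolvent A (starRingEnd ℂ z) (ContinuousLinearMap.adjoint R) := by
  obtain ⟨hdense, hsymm, hmax⟩ := hA
  set R' := ContinuousLinearMap.adjoint R with hR'
  have key : ∀ (x : H) (v : A.domain),
      ⟪R' x, (A v : H)⟫_ℂ = ⟪(starRingEnd ℂ z) • R' x - x, (v : H)⟫_ℂ := by
    intro x v
    set y := -(A v) + z • (v : H) with hy
    have hRy : R y = (v : H) := hR.2.2 v
    have hAv : (A v : H) = z • (v : H) - y := by rw [hy]; abel
    rw [hAv, inner_sub_right, inner_smul_right, inner_sub_left, inner_smul_left]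
    rw [ContinuousLinearMap.adjoint_inner_left R y x, hRy]
    simp
  have hmem : ∀ x : H, R' x ∈ A.domain ∧
      (∀ hx : R' x ∈ A.domain, A ⟨R' x, hx⟩ = (starRingEnd ℂ z) • R' x - x) := by
    intro x
    obtain ⟨hx, hTx⟩ := hmax (R' x) ((starRingEnd ℂ z) • R' x - x) (fun v => key x v)
    refine ⟨hx, fun hx' => ?_⟩
    have : (⟨R' x, hx'⟩ : A.domain) = ⟨R' x, hx⟩ := Subtype.ext rfl
    rw [this, hTx]
  refine ⟨fun x => (hmem x).1, fun x hx => ?_, fun u => ?_⟩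
  · rw [(hmem x).2 hx]; abel
  · apply ext_inner_right ℂ
    intro y
    rw [ContinuousLinearMap.adjoint_inner_left]
    have hRy : R y ∈ A.domain := hR.1 y
    rw [inner_add_left, inner_neg_left, inner_smul_left]
    have h1 : ⟪(A u : H), R y⟫_ℂ = ⟪(u : H), (A ⟨R y, hRy⟩ : H)⟫_ℂ := hsymm u ⟨R y, hRy⟩
    rw [h1]
    have h2 : -(A ⟨R y, hRy⟩ : H) + z • R y = y := hR.2.1 y hRy
    have : (starRingEnd ℂ) ((starRingEnd ℂ) z) = z := by simp
    rw [this]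
    calc -⟪(u : H), (A ⟨R y, hRy⟩ : H)⟫_ℂ + z * ⟪(u:H), R y⟫_ℂ
        = ⟪(u : H), -(A ⟨R y, hRy⟩ : H) + z • R y⟫_ℂ := by
          rw [inner_add_right, inner_neg_right, inner_smul_right]
      _ = ⟪(u : H), y⟫_ℂ := by rw [h2]

lemma selfAdjoint_resolvent_nonreal {T : H →ₗ.[ℂ] H} (hT : IsSelfAdjointPMap T)
    {z : ℂ} (hz : z.im ≠ 0) : InResolventSet T z := by
  obtain ⟨hdense, hsymm, hmax⟩ := hT
  have hzpos : 0 < |z.im| := abs_pos.2 hz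
  set L : T.domain →ₗ[ℂ] H := z • T.domain.subtype - T.toFun with hL
  have hLval : ∀ u : T.domain, L u = -(T u) + z • (u : H) := by
    intro u
    simp only [hL, LinearMap.sub_apply, LinearMap.smul_apply, Submodule.coe_subtype]
    abel
  have hbb : ∀ u : T.domain, |z.im| * ‖(u : H)‖ ≤ ‖L u‖ := fun u => by
    rw [hLval]; exact bound_below hsymm z u
  have hinj : ∀ u v : T.domain, L u = L v → u = v := by
    intro u v huv
    have h0 : L (u - v) = 0 := by rw [map_sub, huv, sub_self]
    have h1 := hbb (u - v)
    rw [h0, norm_zero] at h1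
    have h2 : ‖((u - v : T.domain) : H)‖ = 0 := by nlinarith [norm_nonneg ((u - v : T.domain) : H)]
    have h3 : ((u - v : T.domain) : H) = 0 := norm_eq_zero.1 h2
    have : (u : H) = (v : H) := by
      have := h3; rw [Submodule.coe_sub, sub_eq_zero] at this; exact this
    exact Subtype.ext this
  -- orthogonal complement of the range is trivial
  have horth : (LinearMap.range L)ᗮ = ⊥ := by
    rw [Submodule.eq_bot_iff]
    intro x hx
    have hx' : ∀ u : T.domain, ⟪x, T u⟫_ℂ = ⟪(starRingEnd ℂ) z • x, (u : H)⟫_ℂ := by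
      intro u
      have h0 : ⟪L u, x⟫_ℂ = 0 := (Submodule.mem_orthogonal _ _).1 hx _ ⟨u, rfl⟩
      have h1 : ⟪x, L u⟫_ℂ = 0 := by rw [← inner_conj_symm, h0, map_zero]
      rw [hLval, inner_add_right, inner_neg_right, inner_smul_right] at h1
      have h2 : ⟪x, T u⟫_ℂ = z * ⟪x, (u : H)⟫_ℂ := by linear_combination -h1
      rw [h2, inner_smul_left]
      simp
    obtain ⟨hxdom, hTx⟩ := hmax x ((starRingEnd ℂ) z • x) hx'
    have hre : ⟪T ⟨x, hxdom⟩, x⟫_ℂ = ⟪x, T ⟨x, hxdom⟩⟫_ℂ := hsymm ⟨x, hxdom⟩ ⟨x, hxdom⟩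
    rw [hTx, inner_smul_left, inner_smul_right] at hre
    simp only [RingHomCompTriple.comp_apply, RingHom.id_apply, RingHom.coe_comp,
      Function.comp_apply, Complex.conj_conj] at hre
    have hinner : ⟪x, x⟫_ℂ = 0 := by
      by_contra hne
      have := mul_right_cancel₀ hne hre
      have him := congrArg Complex.im this
      rw [Complex.conj_im] at him
      exact hz (by linarith)
    exact inner_self_eq_zero.1 hinner
  -- range is closed
  have hclosed : ∀ y ∈ closure ((LinearMap.range L : Submodule ℂ H) : Set H),
      y ∈ LinearMap.range L := by
    intro y hy
    obtain ⟨f, hfmem, hftend⟩ := mem_closure_iff_seq_limit.1 hy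
    choose u hu using hfmem
    have hcauchy : CauchySeq (fun n => ((u n : H))) := by
      have hfc : CauchySeq f := hftend.cauchySeq
      rw [Metric.cauchySeq_iff] at hfc ⊢
      intro ε hε
      obtain ⟨N, hN⟩ := hfc (|z.im| * ε) (by positivity)
      refine ⟨N, fun m hm n hn => ?_⟩
      have hb := hbb (u m - u n)
      rw [map_sub, hu, hu] at hb
      have hd : dist (f m) (f n) < |z.im| * ε := hN m hm n hn
      rw [dist_eq_norm] at hd ⊢
      have : ‖((u m : H)) - ((u n : H))‖ ≤ |z.im|⁻¹ * ‖f m - f n‖ := by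
        rw [le_inv_mul_iff₀ hzpos]
        simpa using hb
      calc ‖((u m : H)) - ((u n : H))‖ ≤ |z.im|⁻¹ * ‖f m - f n‖ := this
        _ < |z.im|⁻¹ * (|z.im| * ε) := by
            apply mul_lt_mul_of_pos_left hd (by positivity)
        _ = ε := by field_simp
    obtain ⟨x, hx⟩ := cauchySeq_tendsto_of_complete hcauchy
    have hTu : Tendsto (fun n => (T (u n) : H)) atTop (𝓝 (z • x - y)) := by
      have heq : ∀ n, (T (u n) : H) = z • ((u n : H)) - f n := by
        intro n
        have h1 := hLval (u n)
        rw [hu n] at h1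
        rw [h1]; abel
      have := (hx.const_smul z).sub hftend
      exact Tendsto.congr (fun n => (heq n).symm) this
    have hmaxapp : ∀ v : T.domain, ⟪x, T v⟫_ℂ = ⟪z • x - y, (v : H)⟫_ℂ := by
      intro v
      have h1 : Tendsto (fun n => ⟪((u n : H)), (T v : H)⟫_ℂ) atTop (𝓝 ⟪x, (T v : H)⟫_ℂ) :=
        hx.inner tendsto_const_nhds
      have h3 : Tendsto (fun n => ⟪(T (u n) : H), (v : H)⟫_ℂ) atTop
          (𝓝 ⟪z • x - y, (v : H)⟫_ℂ) := hTu.inner tendsto_const_nhds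
      have h2 : ∀ n, ⟪((u n : H)), (T v : H)⟫_ℂ = ⟪(T (u n) : H), (v : H)⟫_ℂ :=
        fun n => (hsymm (u n) v).symm
      exact tendsto_nhds_unique (Tendsto.congr h2 h1) h3
    obtain ⟨hxdom, hTx⟩ := hmax x (z • x - y) hmaxapp
    refine ⟨⟨x, hxdom⟩, ?_⟩
    rw [hLval]
    show -(T ⟨x, hxdom⟩) + z • x = y
    rw [hTx]; abel
  have hsurj : ∀ y : H, ∃ u : T.domain, L u = y := by
    intro y
    have h1 : (LinearMap.range L).topologicalClosure = ⊤ :=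
      Submodule.topologicalClosure_eq_top_iff.2 horth
    have h2 : y ∈ (LinearMap.range L).topologicalClosure := by rw [h1]; trivial
    have h3 : y ∈ closure ((LinearMap.range L : Submodule ℂ H) : Set H) := h2
    exact hclosed y h3
  choose Rf hRf using hsurj
  have hRadd : ∀ x y : H, Rf (x + y) = Rf x + Rf y := by
    intro x y
    apply hinj
    rw [map_add, hRf, hRf, hRf]
  have hRsmul : ∀ (c : ℂ) (x : H), Rf (c • x) = c • Rf x := by
    intro c x
    apply hinj
    rw [map_smul, hRf, hRf]
  have hRbound : ∀ x : H, ‖((Rf x : H))‖ ≤ |z.im|⁻¹ * ‖x‖ := by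
    intro x
    have := hbb (Rf x)
    rw [hRf] at this
    rw [le_inv_mul_iff₀ hzpos]
    simpa [mul_comm] using this
  set Rlin : H →ₗ[ℂ] H :=
    { toFun := fun x => ((Rf x : H)),
      map_add' := fun x y => by
        show ((Rf (x + y) : H)) = ((Rf x : H)) + ((Rf y : H))
        rw [hRadd]; simp,
      map_smul' := fun c x => by
        show ((Rf (c • x) : H)) = c • ((Rf x : H))
        rw [hRsmul]; simp } with hRlin
  set R : H →L[ℂ] H := Rlin.mkContinuous (|z.im|⁻¹) hRbound with hRdef
  have hRapp : ∀ x : H, R x = ((Rf x : H)) := fun x => rfl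
  refine ⟨R, fun x => ?_, fun x hx => ?_, fun v => ?_⟩
  · rw [hRapp]; exact (Rf x).2
  · have hsub : (⟨R x, hx⟩ : T.domain) = Rf x := Subtype.ext (hRapp x)
    rw [hsub]
    have h1 := hLval (Rf x)
    rw [hRf] at h1
    have : -(T (Rf x)) + z • ((Rf x : H)) = x := h1.symm
    rw [hRapp]
    exact this
  · have h1 : L (Rf (L v)) = L v := hRf _
    have h2 := hinj _ _ h1
    have h3 : -(T v) + z • (v : H) = L v := (hLval v).symm
    rw [h3, hRapp, h2]


lemma adjoint_bounded_below {T : H →L[ℂ] h} (hT : Function.Surjective T) :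
    ∃ c : ℝ, 0 < c ∧ ∀ φ : h, ‖φ‖ ≤ c * ‖ContinuousLinearMap.adjoint T φ‖ := by
  obtain ⟨C, hC, hCy⟩ := T.exists_preimage_norm_le hT
  refine ⟨C, hC, fun φ => ?_⟩
  obtain ⟨x, hx, hxn⟩ := hCy φ
  have h1 : (‖φ‖ : ℝ) ^ 2 = Complex.re ⟪φ, φ⟫_ℂ := by
    exact (inner_self_eq_norm_sq (𝕜 := ℂ) φ).symm
  have h2 : ⟪φ, φ⟫_ℂ = ⟪ContinuousLinearMap.adjoint T φ, x⟫_ℂ := by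
    rw [ContinuousLinearMap.adjoint_inner_left, hx]
  have h3 : Complex.re ⟪ContinuousLinearMap.adjoint T φ, x⟫_ℂ
      ≤ ‖ContinuousLinearMap.adjoint T φ‖ * ‖x‖ := by
    calc Complex.re ⟪ContinuousLinearMap.adjoint T φ, x⟫_ℂ
        ≤ ‖⟪ContinuousLinearMap.adjoint T φ, x⟫_ℂ‖ := Complex.re_le_norm _
      _ ≤ ‖ContinuousLinearMap.adjoint T φ‖ * ‖x‖ := norm_inner_le_norm _ _
  have h4 : ‖φ‖ ^ 2 ≤ ‖ContinuousLinearMap.adjoint T φ‖ * (C * ‖φ‖) := by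
    rw [h1, h2]
    calc Complex.re ⟪ContinuousLinearMap.adjoint T φ, x⟫_ℂ
        ≤ ‖ContinuousLinearMap.adjoint T φ‖ * ‖x‖ := h3
      _ ≤ ‖ContinuousLinearMap.adjoint T φ‖ * (C * ‖φ‖) := by
          apply mul_le_mul_of_nonneg_left hxn (norm_nonneg _)
  rcases eq_or_lt_of_le (norm_nonneg φ) with h0 | h0
  · rw [← h0]; positivity
  · nlinarith [norm_nonneg (ContinuousLinearMap.adjoint T φ)]

lemma mem_range_adjoint_of_perp {T : H →L[ℂ] h} (hT : Function.Surjective T) (v : H)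
    (hperp : ∀ x : H, T x = 0 → ⟪v, x⟫_ℂ = 0) :
    ∃ φ, ContinuousLinearMap.adjoint T φ = v := by
  set T' := ContinuousLinearMap.adjoint T with hT'
  obtain ⟨c, hc, hbb⟩ := adjoint_bounded_below hT
  set N : Submodule ℂ H := LinearMap.range (T' : h →ₗ[ℂ] H) with hN
  have hclosedN : IsClosed (N : Set H) := by
    have ha : AntilipschitzWith c.toNNReal T' := by
      apply ContinuousLinearMap.antilipschitz_of_bound
      intro φ
      calc ‖φ‖ ≤ c * ‖T' φ‖ := hbb φ
        _ = (c.toNNReal : ℝ) * ‖T' φ‖ := by rw [Real.coe_toNNReal c hc.le]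
    have h2 := ha.isClosed_range T'.uniformContinuous
    have h3 : (N : Set H) = Set.range T' := by
      ext y; simp [hN, LinearMap.mem_range]
    rw [h3]; exact h2
  haveI : CompleteSpace N := hclosedN.completeSpace_coe
  have hv : v ∈ N := by
    rw [← Submodule.orthogonal_orthogonal N]
    rw [Submodule.mem_orthogonal]
    intro w hw
    have hTw : T w = 0 := by
      have h5 : ∀ ψ : h, ⟪ψ, T w⟫_ℂ = 0 := by
        intro ψ
        have h6 : ⟪T' ψ, w⟫_ℂ = 0 := (Submodule.mem_orthogonal _ _).1 hw _ ⟨ψ, rfl⟩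
        rw [← ContinuousLinearMap.adjoint_inner_left]
        exact h6
      have := h5 (T w)
      exact inner_self_eq_zero.1 this
    have := hperp w hTw
    rw [← inner_conj_symm, this, map_zero]
  exact hv

structure Setup (H : Type*) [NormedAddCommGroup H] [InnerProductSpace ℂ H] [CompleteSpace H]
    (h : Type*) [NormedAddCommGroup h] [InnerProductSpace ℂ h] [CompleteSpace h] where
  A : H →ₗ.[ℂ] H
  hA : IsSelfAdjointPMap A
  τ : A.domain →ₗ[ℂ] h
  hτcont : ∃ C : ℝ, ∀ u : A.domain, ‖τ u‖ ≤ C * (‖(u : H)‖ + ‖A u‖)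
  hτsurj : Function.Surjective τ
  hkerdense : Dense {x : H | ∃ u : A.domain, (u : H) = x ∧ τ u = 0}
  lam0 : ℝ
  G : ℂ → h →L[ℂ] H
  hG : ∀ (z : ℂ) (R : H →L[ℂ] H), IsResolvent A (starRingEnd ℂ z) R →
      ∀ (φ : h) (x : H) (hx : R x ∈ A.domain),
        ⟪G z φ, x⟫_ℂ = ⟪φ, τ ⟨R x, hx⟩⟫_ℂ
  M : ℂ → h →L[ℂ] h
  hM : ∀ (z : ℂ) (φ : h) (hmem : G lam0 φ - G z φ ∈ A.domain),
      M z φ = τ ⟨G lam0 φ - G z φ, hmem⟩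
  R0 : H →L[ℂ] H
  hR0 : IsResolvent A ((lam0 : ℝ) : ℂ) R0

namespace Setup

variable (s : Setup H h)

lemma conj_lam0 : (starRingEnd ℂ) ((s.lam0 : ℝ) : ℂ) = ((s.lam0 : ℝ) : ℂ) :=
  Complex.conj_ofReal _

lemma hR0' : IsResolvent s.A ((starRingEnd ℂ) ((s.lam0 : ℝ) : ℂ)) s.R0 := by
  rw [s.conj_lam0]; exact s.hR0

/-- the symmetric pairing lemma for A (λ₀ real): ⟪u, A v⟫ = ⟪A u, v⟫. -/
lemma Asymm' (u v : s.A.domain) : ⟪(u : H), (s.A v : H)⟫_ℂ = ⟪(s.A u : H), (v : H)⟫_ℂ := by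
  rw [← inner_conj_symm, s.hA.2.1 v u, inner_conj_symm]

/-- `τ ∘ R` as a continuous linear map for a resolvent `R` at `z`. -/
noncomputable def tauR {z : ℂ} {R : H →L[ℂ] H} (hR : IsResolvent s.A z R) : H →L[ℂ] h := by
  classical
  obtain hτ := s.hτcont
  set C := Classical.choose hτ with hC
  have hCp := Classical.choose_spec hτ
  exact LinearMap.mkContinuous
    { toFun := fun x => s.τ ⟨R x, hR.1 x⟩
      map_add' := fun x y => by
        have hxy : (⟨R (x + y), hR.1 (x + y)⟩ : s.A.domain)
            = ⟨R x, hR.1 x⟩ + ⟨R y, hR.1 y⟩ := Subtype.ext (by simp)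
        show s.τ ⟨R (x + y), hR.1 (x + y)⟩ = s.τ ⟨R x, hR.1 x⟩ + s.τ ⟨R y, hR.1 y⟩
        rw [hxy, map_add]
      map_smul' := fun c x => by
        have hxy : (⟨R (c • x), hR.1 (c • x)⟩ : s.A.domain)
            = c • ⟨R x, hR.1 x⟩ := Subtype.ext (by simp)
        show s.τ ⟨R (c • x), hR.1 (c • x)⟩ = (RingHom.id ℂ) c • s.τ ⟨R x, hR.1 x⟩
        rw [hxy, map_smul]
        rfl }
    ((max C 0) * (‖R‖ + (‖z‖ * ‖R‖ + 1)))
    (by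
      intro x
      have h1 := hCp ⟨R x, hR.1 x⟩
      have hAval : (s.A ⟨R x, hR.1 x⟩ : H) = z • R x - x := applyA hR x (hR.1 x)
      have h2 : ‖(s.A ⟨R x, hR.1 x⟩ : H)‖ ≤ ‖z‖ * ‖R‖ * ‖x‖ + ‖x‖ := by
        rw [hAval]
        calc ‖z • R x - x‖ ≤ ‖z • R x‖ + ‖x‖ := norm_sub_le _ _
          _ ≤ ‖z‖ * (‖R‖ * ‖x‖) + ‖x‖ := by
              rw [norm_smul]
              gcongr
              exact R.le_opNorm x
          _ = ‖z‖ * ‖R‖ * ‖x‖ + ‖x‖ := by ring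
      have h3 : ‖R x‖ ≤ ‖R‖ * ‖x‖ := R.le_opNorm x
      have h4 : C * (‖R x‖ + ‖(s.A ⟨R x, hR.1 x⟩ : H)‖)
          ≤ max C 0 * (‖R x‖ + ‖(s.A ⟨R x, hR.1 x⟩ : H)‖) := by
        apply mul_le_mul_of_nonneg_right (le_max_left _ _)
        positivity
      calc ‖s.τ ⟨R x, hR.1 x⟩‖ ≤ C * (‖R x‖ + ‖(s.A ⟨R x, hR.1 x⟩ : H)‖) := h1
        _ ≤ max C 0 * (‖R x‖ + ‖(s.A ⟨R x, hR.1 x⟩ : H)‖) := h4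
        _ ≤ max C 0 * (‖R‖ * ‖x‖ + (‖z‖ * ‖R‖ * ‖x‖ + ‖x‖)) := by
            apply mul_le_mul_of_nonneg_left _ (le_max_right _ _)
            gcongr
        _ = (max C 0) * (‖R‖ + (‖z‖ * ‖R‖ + 1)) * ‖x‖ := by ring)

lemma tauR_apply {z : ℂ} {R : H →L[ℂ] H} (hR : IsResolvent s.A z R) (x : H)
    (hx : R x ∈ s.A.domain) : s.tauR hR x = s.τ ⟨R x, hx⟩ := rfl

lemma tauR_surj {z : ℂ} {R : H →L[ℂ] H} (hR : IsResolvent s.A z R) :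
    Function.Surjective (s.tauR hR) := by
  intro ξ
  obtain ⟨u, hu⟩ := s.hτsurj ξ
  refine ⟨-(s.A u) + z • (u : H), ?_⟩
  rw [s.tauR_apply hR _ (hR.1 _)]
  have h1 : (⟨R (-(s.A u) + z • (u : H)), hR.1 _⟩ : s.A.domain) = u :=
    Subtype.ext (hR.2.2 u)
  rw [h1, hu]

lemma G_eq_adjoint {z : ℂ} {R' : H →L[ℂ] H} (hR' : IsResolvent s.A ((starRingEnd ℂ) z) R') :
    s.G z = ContinuousLinearMap.adjoint (s.tauR hR') := by
  ext φ
  apply ext_inner_right ℂ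
  intro x
  rw [s.hG z R' hR' φ x (hR'.1 x), ContinuousLinearMap.adjoint_inner_left]
  rfl

lemma G_inj {z : ℂ} {R' : H →L[ℂ] H} (hR' : IsResolvent s.A ((starRingEnd ℂ) z) R')
    {φ : h} (hφ : s.G z φ = 0) : φ = 0 := by
  obtain ⟨c, hc, hbb⟩ := adjoint_bounded_below (s.tauR_surj hR')
  have h1 := hbb φ
  rw [← s.G_eq_adjoint hR', hφ] at h1
  simp at h1
  exact h1

lemma mem_range_G {z : ℂ} {R' : H →L[ℂ] H} (hR' : IsResolvent s.A ((starRingEnd ℂ) z) R')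
    (v : H)
    (hperp : ∀ u : s.A.domain, s.τ u = 0 →
      ⟪v, -(s.A u : H) + ((starRingEnd ℂ) z) • (u : H)⟫_ℂ = 0) :
    ∃ φ : h, s.G z φ = v := by
  rw [s.G_eq_adjoint hR']
  apply mem_range_adjoint_of_perp (s.tauR_surj hR') v
  intro x hx
  have hτ0 : s.τ ⟨R' x, hR'.1 x⟩ = 0 := hx
  have h1 := hperp ⟨R' x, hR'.1 x⟩ hτ0
  have h2 : -(s.A ⟨R' x, hR'.1 x⟩ : H) + ((starRingEnd ℂ) z) • (R' x) = x := hR'.2.1 x (hR'.1 x)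
  rw [h2] at h1
  exact h1

/-- the key pairing `⟪G_z ψ, (-A + z̄) w⟫ = ⟪ψ, τ w⟫`. -/
lemma G_perp_ker {z : ℂ} {R' : H →L[ℂ] H} (hR' : IsResolvent s.A ((starRingEnd ℂ) z) R')
    (ψ : h) (w : s.A.domain) :
    ⟪s.G z ψ, -(s.A w : H) + ((starRingEnd ℂ) z) • (w : H)⟫_ℂ = ⟪ψ, s.τ w⟫_ℂ := by
  rw [s.hG z R' hR' ψ _ (hR'.1 _)]
  congr 1
  have h1 : (⟨R' (-(s.A w : H) + ((starRingEnd ℂ) z) • (w : H)), hR'.1 _⟩ : s.A.domain) = w :=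
    Subtype.ext (hR'.2.2 w)
  rw [h1]

/-- the resolvent identity `R_v x - R_w x = (w - v) • R_w (R_v x)`. -/
lemma res_identity {w v : ℂ} {Rw Rv : H →L[ℂ] H} (hw : IsResolvent s.A w Rw)
    (hv : IsResolvent s.A v Rv) (x : H) :
    Rv x - Rw x = (w - v) • Rw (Rv x) := by
  have h1 : -(s.A ⟨Rv x, hv.1 x⟩ : H) + w • (Rv x) = x + (w - v) • Rv x := by
    have h2 : -(s.A ⟨Rv x, hv.1 x⟩ : H) + v • (Rv x) = x := hv.2.1 x (hv.1 x)
    have h3 : -(s.A ⟨Rv x, hv.1 x⟩ : H) + w • (Rv x)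
        = (-(s.A ⟨Rv x, hv.1 x⟩ : H) + v • (Rv x)) + (w - v) • Rv x := by
      rw [sub_smul]; abel
    rw [h3, h2]
  have h4 : Rw (-(s.A ⟨Rv x, hv.1 x⟩ : H) + w • (Rv x)) = Rv x := hw.2.2 ⟨Rv x, hv.1 x⟩
  rw [h1, map_add, map_smul] at h4
  linear_combination (norm := module) -h4

/-- `G - G_z = (z - λ₀) R_z G`, in particular `G φ - G_z φ ∈ dom A`. -/
lemma G_diff_eq {z : ℂ} {R : H →L[ℂ] H} (hz : IsResolvent s.A z R) (φ : h) :
    s.G s.lam0 φ - s.G z φ = (z - (s.lam0 : ℂ)) • R (s.G s.lam0 φ) := by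
  have hR' : IsResolvent s.A ((starRingEnd ℂ) z) (ContinuousLinearMap.adjoint R) :=
    adjoint_isResolvent s.hA hz
  set R' := ContinuousLinearMap.adjoint R
  apply ext_inner_right ℂ
  intro x
  rw [inner_sub_left, s.hG z R' hR' φ x (hR'.1 x),
    s.hG ((s.lam0 : ℝ) : ℂ) s.R0 s.hR0' φ x (s.hR0.1 x)]
  have hres := s.res_identity s.hR0 hR' x
  -- hres : R' x - R0 x = (lam0 - conj z) • R0 (R' x)
  have hmem : s.R0 (R' x) ∈ s.A.domain := s.hR0.1 _
  have hsub : ((⟨s.R0 x, s.hR0.1 x⟩ : s.A.domain) - ⟨R' x, hR'.1 x⟩)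
      = ((starRingEnd ℂ) z - (s.lam0 : ℂ)) • (⟨s.R0 (R' x), hmem⟩ : s.A.domain) := by
    apply Subtype.ext
    show s.R0 x - R' x = ((starRingEnd ℂ) z - (s.lam0 : ℂ)) • s.R0 (R' x)
    linear_combination (norm := module) -hres
  calc ⟪φ, s.τ ⟨s.R0 x, s.hR0.1 x⟩⟫_ℂ - ⟪φ, s.τ ⟨R' x, hR'.1 x⟩⟫_ℂ
      = ⟪φ, s.τ ((⟨s.R0 x, s.hR0.1 x⟩ : s.A.domain) - ⟨R' x, hR'.1 x⟩)⟫_ℂ := by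
        rw [map_sub, inner_sub_right]
    _ = ((starRingEnd ℂ) z - (s.lam0 : ℂ)) * ⟪φ, s.τ ⟨s.R0 (R' x), hmem⟩⟫_ℂ := by
        rw [hsub, map_smul, inner_smul_right]
    _ = ((starRingEnd ℂ) z - (s.lam0 : ℂ)) * ⟪s.G s.lam0 φ, R' x⟫_ℂ := by
        rw [s.hG ((s.lam0 : ℝ) : ℂ) s.R0 s.hR0' φ (R' x) hmem]
    _ = ⟪(z - (s.lam0 : ℂ)) • R (s.G s.lam0 φ), x⟫_ℂ := by
        rw [inner_smul_left, ContinuousLinearMap.adjoint_inner_right]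
        congr 1
        rw [map_sub]
        simp [Complex.conj_ofReal]

lemma eq_of_perp_ker {c : H} (hc : ∀ u : s.A.domain, s.τ u = 0 → ⟪c, (u : H)⟫_ℂ = 0) :
    c = 0 := by
  have h1 : ∀ y : H, ⟪c, y⟫_ℂ = 0 := by
    have hcont : Continuous fun y : H => ⟪c, y⟫_ℂ := continuous_const.inner continuous_id
    have heq : Set.EqOn (fun y : H => ⟪c, y⟫_ℂ) (fun _ => (0 : ℂ))
        {x : H | ∃ u : s.A.domain, (u : H) = x ∧ s.τ u = 0} := by
      rintro y ⟨u, rfl, hu⟩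
      exact hc u hu
    have := Continuous.ext_on s.hkerdense hcont continuous_const heq
    intro y
    exact congrFun this y
  have := h1 c
  exact inner_self_eq_zero.1 this

lemma G_lam0_perp (φ : h) (w : s.A.domain) :
    ⟪s.G s.lam0 φ, -(s.A w : H) + ((s.lam0 : ℝ) : ℂ) • (w : H)⟫_ℂ = ⟪φ, s.τ w⟫_ℂ := by
  have := s.G_perp_ker s.hR0' φ w
  rw [s.conj_lam0] at this
  exact this

lemma G_inner_A (φ : h) (w : s.A.domain) :
    ⟪s.G s.lam0 φ, (s.A w : H)⟫_ℂ
      = ((s.lam0 : ℝ) : ℂ) * ⟪s.G s.lam0 φ, (w : H)⟫_ℂ - ⟪φ, s.τ w⟫_ℂ := by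
  have h1 := s.G_lam0_perp φ w
  rw [inner_add_right, inner_neg_right, inner_smul_right] at h1
  linear_combination -h1

lemma A_inner_G (φ : h) (w : s.A.domain) :
    ⟪(s.A w : H), s.G s.lam0 φ⟫_ℂ
      = ((s.lam0 : ℝ) : ℂ) * ⟪(w : H), s.G s.lam0 φ⟫_ℂ - ⟪s.τ w, φ⟫_ℂ := by
  have h1 := s.G_inner_A φ w
  have h2 := congrArg (starRingEnd ℂ) h1
  rw [inner_conj_symm] at h2
  rw [h2, map_sub, map_mul, inner_conj_symm, inner_conj_symm, Complex.conj_ofReal]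

lemma G_lam0_mem_domA {φ : h} (hmem : s.G s.lam0 φ ∈ s.A.domain) : s.G s.lam0 φ = 0 := by
  set w : s.A.domain := ⟨s.G s.lam0 φ, hmem⟩ with hw
  have hzero : -(s.A w : H) + ((s.lam0 : ℝ) : ℂ) • (w : H) = 0 := by
    apply s.eq_of_perp_ker
    intro u hu
    have h1 : ⟪(w : H), -(s.A u : H) + ((s.lam0 : ℝ) : ℂ) • (u : H)⟫_ℂ = 0 := by
      have := s.G_lam0_perp φ u
      rw [hu, inner_zero_right] at this
      exact this
    rw [inner_add_right, inner_neg_right, inner_smul_right] at h1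
    rw [inner_add_left, inner_neg_left, inner_smul_left, Complex.conj_ofReal]
    have h2 : ⟪(s.A w : H), (u : H)⟫_ℂ = ⟪(w : H), (s.A u : H)⟫_ℂ := s.hA.2.1 w u
    rw [h2]
    linear_combination h1
  have h3 : s.R0 (-(s.A w) + ((s.lam0 : ℝ) : ℂ) • (w : H)) = (w : H) := s.hR0.2.2 w
  rw [hzero, map_zero] at h3
  exact h3.symm

lemma G_lam0_inj {φ : h} (hφ : s.G s.lam0 φ = 0) : φ = 0 := s.G_inj s.hR0' hφ

lemma decomp_unique {u₀ u₁ : s.A.domain} {φ ψ : h}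
    (heq : (u₀ : H) + s.G s.lam0 φ = (u₁ : H) + s.G s.lam0 ψ) : u₀ = u₁ ∧ φ = ψ := by
  have h1 : s.G s.lam0 (φ - ψ) = ((u₁ - u₀ : s.A.domain) : H) := by
    rw [map_sub]
    push_cast
    linear_combination (norm := module) heq
  have h2 : s.G s.lam0 (φ - ψ) ∈ s.A.domain := by rw [h1]; exact (u₁ - u₀).2
  have h3 := s.G_lam0_mem_domA h2
  have h4 : φ - ψ = 0 := s.G_lam0_inj h3
  have h5 : ((u₁ - u₀ : s.A.domain) : H) = 0 := by rw [← h1, h3]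
  constructor
  · have : u₁ - u₀ = 0 := Subtype.ext (by simpa using h5)
    have := sub_eq_zero.1 this
    exact this.symm
  · exact sub_eq_zero.1 h4

lemma G_diff_mem {z : ℂ} {R : H →L[ℂ] H} (hz : IsResolvent s.A z R) (φ : h) :
    s.G s.lam0 φ - s.G z φ ∈ s.A.domain := by
  rw [s.G_diff_eq hz φ]
  exact s.A.domain.smul_mem _ (hz.1 _)

lemma pairing (u₀ v₀ : s.A.domain) (φ χ : h) :
    ⟪(u₀ : H) + s.G s.lam0 φ, (s.A v₀ : H) + ((s.lam0 : ℝ) : ℂ) • s.G s.lam0 χ⟫_ℂ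
      - ⟪(s.A u₀ : H) + ((s.lam0 : ℝ) : ℂ) • s.G s.lam0 φ, (v₀ : H) + s.G s.lam0 χ⟫_ℂ
      = ⟪s.τ u₀, χ⟫_ℂ - ⟪φ, s.τ v₀⟫_ℂ := by
  have i1 : ⟪(u₀ : H), (s.A v₀ : H)⟫_ℂ = ⟪(s.A u₀ : H), (v₀ : H)⟫_ℂ := s.Asymm' u₀ v₀
  have i2 := s.G_inner_A χ u₀   -- ⟪Gχ, A u₀⟫ = λ⟪Gχ,u₀⟫ - ⟪χ, τ u₀⟫ (not needed directly)
  have i3 := s.G_inner_A φ v₀   -- ⟪Gφ, A v₀⟫ = λ⟪Gφ,v₀⟫ - ⟪φ, τ v₀⟫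
  have i4 := s.A_inner_G χ u₀   -- ⟪A u₀, Gχ⟫ = λ⟪u₀, Gχ⟫ - ⟪τ u₀, χ⟫
  simp only [inner_add_left, inner_add_right, inner_smul_left, inner_smul_right,
    Complex.conj_ofReal]
  linear_combination i1 + i3 - i4

end Setup

namespace Setup
variable (s : Setup H h)

lemma B_decomp (B : H →ₗ.[ℂ] H) (hB : IsSelfAdjointPMap B)
    (hBextS : ∀ u : s.A.domain, s.τ u = 0 →
      ∃ hu : (u : H) ∈ B.domain, B ⟨(u : H), hu⟩ = s.A u) (uB : B.domain) :
    ∃ (u₀ : s.A.domain) (φ : h), (uB : H) = (u₀ : H) + s.G s.lam0 φ ∧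
      (B uB : H) = (s.A u₀ : H) + ((s.lam0 : ℝ) : ℂ) • s.G s.lam0 φ := by
  set lam : ℂ := ((s.lam0 : ℝ) : ℂ) with hlam
  set x := -(B uB : H) + lam • (uB : H) with hx
  set u₀ : s.A.domain := ⟨s.R0 x, s.hR0.1 x⟩ with hu₀
  have hAu₀ : -(s.A u₀ : H) + lam • (u₀ : H) = x := s.hR0.2.1 x (s.hR0.1 x)
  have hperp : ∀ u : s.A.domain, s.τ u = 0 →
      ⟪(uB : H) - (u₀ : H), -(s.A u : H) + (starRingEnd ℂ) lam • (u : H)⟫_ℂ = 0 := by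
    intro u hu
    rw [hlam, s.conj_lam0]
    obtain ⟨huB, hBu⟩ := hBextS u hu
    have h1 : ⟪(uB : H), -(s.A u : H) + lam • (u : H)⟫_ℂ = ⟪x, (u : H)⟫_ℂ := by
      rw [inner_add_right, inner_neg_right, inner_smul_right]
      have h2 : ⟪(B uB : H), (u : H)⟫_ℂ = ⟪(uB : H), (B ⟨(u : H), huB⟩ : H)⟫_ℂ :=
        hB.2.1 uB ⟨(u : H), huB⟩
      rw [hBu] at h2
      rw [hx, inner_add_left, inner_neg_left, inner_smul_left, hlam, Complex.conj_ofReal]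
      linear_combination h2
    have h3 : ⟪(u₀ : H), -(s.A u : H) + lam • (u : H)⟫_ℂ = ⟪x, (u : H)⟫_ℂ := by
      rw [inner_add_right, inner_neg_right, inner_smul_right]
      rw [← hAu₀, inner_add_left, inner_neg_left, inner_smul_left, hlam, Complex.conj_ofReal]
      have h4 : ⟪(s.A u₀ : H), (u : H)⟫_ℂ = ⟪(u₀ : H), (s.A u : H)⟫_ℂ := s.hA.2.1 u₀ u
      rw [h4]
    rw [inner_sub_left, h1, h3, sub_self]
  obtain ⟨φ, hGφ⟩ := s.mem_range_G s.hR0' ((uB : H) - (u₀ : H)) hperp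
  refine ⟨u₀, φ, by rw [hGφ]; abel, ?_⟩
  have hc : (B uB : H) - (s.A u₀ : H) - lam • s.G s.lam0 φ = 0 := by
    apply s.eq_of_perp_ker
    intro u hu
    obtain ⟨huB, hBu⟩ := hBextS u hu
    have e1 : ⟪(B uB : H), (u : H)⟫_ℂ = ⟪(uB : H), (s.A u : H)⟫_ℂ := by
      rw [hB.2.1 uB ⟨(u : H), huB⟩, hBu]
    have e2 : (uB : H) = (u₀ : H) + s.G s.lam0 φ := by rw [hGφ]; abel
    have e3 : ⟪(u₀ : H), (s.A u : H)⟫_ℂ = ⟪(s.A u₀ : H), (u : H)⟫_ℂ := s.Asymm' u₀ u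
    have e4 := s.G_inner_A φ u
    rw [hu, inner_zero_right] at e4
    rw [inner_sub_left, inner_sub_left, e1, e2, inner_add_left, e3, e4,
      inner_smul_left, hlam, Complex.conj_ofReal]
    ring
  linear_combination (norm := module) hc

lemma B_action (B : H →ₗ.[ℂ] H) (hB : IsSelfAdjointPMap B)
    (hBextS : ∀ u : s.A.domain, s.τ u = 0 →
      ∃ hu : (u : H) ∈ B.domain, B ⟨(u : H), hu⟩ = s.A u)
    (u₀ : s.A.domain) (φ : h) (hmem : (u₀ : H) + s.G s.lam0 φ ∈ B.domain) :
    (B ⟨(u₀ : H) + s.G s.lam0 φ, hmem⟩ : H)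
      = (s.A u₀ : H) + ((s.lam0 : ℝ) : ℂ) • s.G s.lam0 φ := by
  obtain ⟨u₁, ψ, hdecomp, haction⟩ := s.B_decomp B hB hBextS ⟨_, hmem⟩
  obtain ⟨hu, hφ⟩ := s.decomp_unique hdecomp
  rw [haction, ← hu, ← hφ]

/-- the subspace `D` of `φ`'s appearing in decompositions of elements of `dom B`. -/
def DD (B : H →ₗ.[ℂ] H) : Submodule ℂ h where
  carrier := {φ : h | ∃ u₀ : s.A.domain, (u₀ : H) + s.G s.lam0 φ ∈ B.domain}
  add_mem' := by
    rintro φ ψ ⟨u₀, hu₀⟩ ⟨v₀, hv₀⟩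
    refine ⟨u₀ + v₀, ?_⟩
    have : ((u₀ + v₀ : s.A.domain) : H) + s.G s.lam0 (φ + ψ)
        = ((u₀ : H) + s.G s.lam0 φ) + ((v₀ : H) + s.G s.lam0 ψ) := by
      push_cast [map_add]; abel
    rw [this]
    exact B.domain.add_mem hu₀ hv₀
  zero_mem' := by
    refine ⟨0, ?_⟩
    have : ((0 : s.A.domain) : H) + s.G s.lam0 0 = 0 := by simp
    rw [this]
    exact B.domain.zero_mem
  smul_mem' := by
    rintro c φ ⟨u₀, hu₀⟩
    refine ⟨c • u₀, ?_⟩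
    have : ((c • u₀ : s.A.domain) : H) + s.G s.lam0 (c • φ)
        = c • ((u₀ : H) + s.G s.lam0 φ) := by
      push_cast [map_smul]; rw [smul_add]
    rw [this]
    exact B.domain.smul_mem c hu₀

def KK (B : H →ₗ.[ℂ] H) : Submodule ℂ h := (s.DD B).topologicalClosure

instance KK_complete (B : H →ₗ.[ℂ] H) : CompleteSpace (s.KK B) :=
  (Submodule.isClosed_topologicalClosure _).completeSpace_coe

noncomputable def PP (B : H →ₗ.[ℂ] H) : h →L[ℂ] h :=
  (s.KK B).subtypeL.comp (Submodule.orthogonalProjectionOnto (s.KK B))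

lemma PP_apply (B : H →ₗ.[ℂ] H) (x : h) :
    s.PP B x = (Submodule.orthogonalProjectionOnto (s.KK B) x : h) := rfl

lemma PP_mem (B : H →ₗ.[ℂ] H) (x : h) : s.PP B x ∈ s.KK B := (Submodule.orthogonalProjectionOnto _ x).2

lemma PP_eq_self (B : H →ₗ.[ℂ] H) {x : h} (hx : x ∈ s.KK B) : s.PP B x = x := by
  exact (Submodule.starProjection_eq_self_iff (K := s.KK B)).2 hx

lemma PP_inner_left_right (B : H →ₗ.[ℂ] H) (x y : h) :
    ⟪s.PP B x, y⟫_ℂ = ⟪x, s.PP B y⟫_ℂ := Submodule.inner_starProjection_left_eq_right _ x y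

lemma PP_zero_of_orth (B : H →ₗ.[ℂ] H) {x : h} (hx : ∀ k ∈ s.KK B, ⟪x, k⟫_ℂ = 0) :
    s.PP B x = 0 := by
  rw [PP_apply]
  have : Submodule.orthogonalProjectionOnto (s.KK B) x = 0 := by
    apply Submodule.orthogonalProjectionOnto_apply_of_mem_orthogonal
    rw [Submodule.mem_orthogonal']
    exact hx
  rw [this]; rfl

lemma inner_PP_left (B : H →ₗ.[ℂ] H) (x k : h) (hk : k ∈ s.KK B) :
    ⟪s.PP B x, k⟫_ℂ = ⟪x, k⟫_ℂ := by
  rw [s.PP_inner_left_right B x k, s.PP_eq_self B hk]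

lemma inner_PP_right (B : H →ₗ.[ℂ] H) (x k : h) (hk : k ∈ s.KK B) :
    ⟪k, s.PP B x⟫_ℂ = ⟪k, x⟫_ℂ := by
  rw [← inner_conj_symm, s.inner_PP_left B x k hk, inner_conj_symm]

lemma DD_le_KK (B : H →ₗ.[ℂ] H) : s.DD B ≤ s.KK B := Submodule.le_topologicalClosure _

lemma range_PP (B : H →ₗ.[ℂ] H) : LinearMap.range (s.PP B : h →ₗ[ℂ] h) = s.KK B := by
  apply le_antisymm
  · rintro x ⟨y, rfl⟩
    exact s.PP_mem B y
  · intro k hk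
    exact ⟨k, s.PP_eq_self B hk⟩

lemma tau_perp_D (B : H →ₗ.[ℂ] H) (hB : IsSelfAdjointPMap B)
    (hBextS : ∀ u : s.A.domain, s.τ u = 0 →
      ∃ hu : (u : H) ∈ B.domain, B ⟨(u : H), hu⟩ = s.A u)
    (w : s.A.domain) (hwB : (w : H) ∈ B.domain)
    (ψ : h) (hψ : ψ ∈ s.DD B) : ⟪ψ, s.τ w⟫_ℂ = 0 := by
  obtain ⟨v₀, hv⟩ := hψ
  have hBv := s.B_action B hB hBextS v₀ ψ hv
  have hwB' : (w : H) + s.G s.lam0 0 ∈ B.domain := by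
    rw [map_zero, add_zero]; exact hwB
  have hBw := s.B_action B hB hBextS w 0 hwB'
  have hsym := hB.2.1 ⟨(v₀ : H) + s.G s.lam0 ψ, hv⟩ ⟨(w : H) + s.G s.lam0 0, hwB'⟩
  rw [hBv, hBw] at hsym
  have hp := s.pairing v₀ w ψ 0
  rw [inner_zero_right] at hp
  have hsym' : ⟪(s.A v₀ : H) + ((s.lam0 : ℝ) : ℂ) • s.G s.lam0 ψ,
        (w : H) + s.G s.lam0 0⟫_ℂ
      = ⟪(v₀ : H) + s.G s.lam0 ψ, (s.A w : H) + ((s.lam0 : ℝ) : ℂ) • s.G s.lam0 0⟫_ℂ := hsym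
  linear_combination hp + hsym'


lemma theta_indep (B : H →ₗ.[ℂ] H) (hB : IsSelfAdjointPMap B)
    (hBextS : ∀ u : s.A.domain, s.τ u = 0 →
      ∃ hu : (u : H) ∈ B.domain, B ⟨(u : H), hu⟩ = s.A u)
    (φ : h) (u₀ u₁ : s.A.domain)
    (h₀ : (u₀ : H) + s.G s.lam0 φ ∈ B.domain)
    (h₁ : (u₁ : H) + s.G s.lam0 φ ∈ B.domain) :
    s.PP B (s.τ u₀) = s.PP B (s.τ u₁) := by
  set w : s.A.domain := u₀ - u₁ with hw
  have hwB : (w : H) ∈ B.domain := by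
    have heq : (w : H) = ((u₀ : H) + s.G s.lam0 φ) - ((u₁ : H) + s.G s.lam0 φ) := by
      rw [hw]; push_cast; abel
    rw [heq]
    exact B.domain.sub_mem h₀ h₁
  have hperp : ∀ k ∈ s.KK B, ⟪s.τ w, k⟫_ℂ = 0 := by
    intro k hk
    have hD : (s.DD B : Set h) ⊆ {y : h | ⟪s.τ w, y⟫_ℂ = 0} := by
      intro ψ hψ
      have := s.tau_perp_D B hB hBextS w hwB ψ hψ
      show ⟪s.τ w, ψ⟫_ℂ = 0
      rw [← inner_conj_symm, this, map_zero]
    have hcl : IsClosed {y : h | ⟪s.τ w, y⟫_ℂ = 0} :=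
      isClosed_eq (continuous_const.inner continuous_id) continuous_const
    have hsub := closure_minimal hD hcl
    have hk' : k ∈ closure (s.DD B : Set h) := hk
    exact hsub hk'
  have hPzero : s.PP B (s.τ w) = 0 := s.PP_zero_of_orth B hperp
  have hτw : s.τ w = s.τ u₀ - s.τ u₁ := by rw [hw, map_sub]
  rw [hτw, map_sub] at hPzero
  linear_combination (norm := module) hPzero

noncomputable def pick (B : H →ₗ.[ℂ] H) {φ : h} (hφ : φ ∈ s.DD B) : s.A.domain :=
  Classical.choose (hφ : ∃ u₀ : s.A.domain, (u₀ : H) + s.G s.lam0 φ ∈ B.domain)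

lemma pick_spec (B : H →ₗ.[ℂ] H) {φ : h} (hφ : φ ∈ s.DD B) :
    ((s.pick B hφ : s.A.domain) : H) + s.G s.lam0 φ ∈ B.domain :=
  Classical.choose_spec (hφ : ∃ u₀ : s.A.domain, (u₀ : H) + s.G s.lam0 φ ∈ B.domain)

noncomputable def Theta (B : H →ₗ.[ℂ] H) (hB : IsSelfAdjointPMap B)
    (hBextS : ∀ u : s.A.domain, s.τ u = 0 →
      ∃ hu : (u : H) ∈ B.domain, B ⟨(u : H), hu⟩ = s.A u) : h →ₗ.[ℂ] h where
  domain := s.DD B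
  toFun :=
  { toFun := fun φ => s.PP B (s.τ (s.pick B φ.2))
    map_add' := by
      intro φ ψ
      show s.PP B (s.τ (s.pick B (φ + ψ).2))
        = s.PP B (s.τ (s.pick B φ.2)) + s.PP B (s.τ (s.pick B ψ.2))
      have h1 : ((s.pick B φ.2 + s.pick B ψ.2 : s.A.domain) : H)
          + s.G s.lam0 ((φ : h) + (ψ : h)) ∈ B.domain := by
        have heq : ((s.pick B φ.2 + s.pick B ψ.2 : s.A.domain) : H)
            + s.G s.lam0 ((φ : h) + (ψ : h))
            = (((s.pick B φ.2 : s.A.domain) : H) + s.G s.lam0 (φ : h))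
              + (((s.pick B ψ.2 : s.A.domain) : H) + s.G s.lam0 (ψ : h)) := by
          push_cast [map_add]; abel
        rw [heq]
        exact B.domain.add_mem (s.pick_spec B φ.2) (s.pick_spec B ψ.2)
      have h2 : (((φ + ψ : (s.DD B)) : h)) = (φ : h) + (ψ : h) := rfl
      have h3 := s.theta_indep B hB hBextS ((φ : h) + (ψ : h))
        (s.pick B (φ + ψ).2) (s.pick B φ.2 + s.pick B ψ.2)
        (by rw [← h2]; exact s.pick_spec B (φ + ψ).2) h1
      rw [h3, map_add, map_add]
    map_smul' := by
      intro c φ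
      show s.PP B (s.τ (s.pick B (c • φ).2)) = c • s.PP B (s.τ (s.pick B φ.2))
      have h1 : ((c • s.pick B φ.2 : s.A.domain) : H)
          + s.G s.lam0 (c • (φ : h)) ∈ B.domain := by
        have heq : ((c • s.pick B φ.2 : s.A.domain) : H) + s.G s.lam0 (c • (φ : h))
            = c • (((s.pick B φ.2 : s.A.domain) : H) + s.G s.lam0 (φ : h)) := by
          push_cast [map_smul]; rw [smul_add]
        rw [heq]
        exact B.domain.smul_mem c (s.pick_spec B φ.2)
      have h2 : (((c • φ : (s.DD B)) : h)) = c • (φ : h) := rfl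
      have h3 := s.theta_indep B hB hBextS (c • (φ : h))
        (s.pick B (c • φ).2) (c • s.pick B φ.2)
        (by rw [← h2]; exact s.pick_spec B (c • φ).2) h1
      rw [h3, map_smul, map_smul] }

lemma Theta_spec (B : H →ₗ.[ℂ] H) (hB : IsSelfAdjointPMap B)
    (hBextS : ∀ u : s.A.domain, s.τ u = 0 →
      ∃ hu : (u : H) ∈ B.domain, B ⟨(u : H), hu⟩ = s.A u)
    (φ : h) (hφ : φ ∈ s.DD B) (u₀ : s.A.domain)
    (hmem : (u₀ : H) + s.G s.lam0 φ ∈ B.domain) :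
    (s.Theta B hB hBextS) ⟨φ, hφ⟩ = s.PP B (s.τ u₀) := by
  show s.PP B (s.τ (s.pick B hφ)) = s.PP B (s.τ u₀)
  exact s.theta_indep B hB hBextS φ _ u₀ (s.pick_spec B hφ) hmem

lemma Theta_mem_KK (B : H →ₗ.[ℂ] H) (hB : IsSelfAdjointPMap B)
    (hBextS : ∀ u : s.A.domain, s.τ u = 0 →
      ∃ hu : (u : H) ∈ B.domain, B ⟨(u : H), hu⟩ = s.A u)
    (φ : (s.Theta B hB hBextS).domain) : (s.Theta B hB hBextS) φ ∈ s.KK B := by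
  show s.PP B _ ∈ s.KK B
  exact s.PP_mem B _

lemma theta_symm (B : H →ₗ.[ℂ] H) (hB : IsSelfAdjointPMap B)
    (hBextS : ∀ u : s.A.domain, s.τ u = 0 →
      ∃ hu : (u : H) ∈ B.domain, B ⟨(u : H), hu⟩ = s.A u)
    (φ ψ : h) (hφ : φ ∈ s.DD B) (hψ : ψ ∈ s.DD B) :
    ⟪(s.Theta B hB hBextS) ⟨φ, hφ⟩, ψ⟫_ℂ = ⟪φ, (s.Theta B hB hBextS) ⟨ψ, hψ⟩⟫_ℂ := by
  obtain ⟨u₀, hu₀⟩ := id hφ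
  obtain ⟨v₀, hv₀⟩ := id hψ
  rw [s.Theta_spec B hB hBextS φ _ u₀ hu₀, s.Theta_spec B hB hBextS ψ _ v₀ hv₀]
  have hBu := s.B_action B hB hBextS u₀ φ hu₀
  have hBv := s.B_action B hB hBextS v₀ ψ hv₀
  have hsym := hB.2.1 ⟨(u₀ : H) + s.G s.lam0 φ, hu₀⟩ ⟨(v₀ : H) + s.G s.lam0 ψ, hv₀⟩
  rw [hBu, hBv] at hsym
  have hsym' : ⟪(s.A u₀ : H) + ((s.lam0 : ℝ) : ℂ) • s.G s.lam0 φ,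
        (v₀ : H) + s.G s.lam0 ψ⟫_ℂ
      = ⟪(u₀ : H) + s.G s.lam0 φ, (s.A v₀ : H) + ((s.lam0 : ℝ) : ℂ) • s.G s.lam0 ψ⟫_ℂ := hsym
  have hp := s.pairing u₀ v₀ φ ψ
  have hzero : ⟪s.τ u₀, ψ⟫_ℂ = ⟪φ, s.τ v₀⟫_ℂ := by linear_combination -hp - hsym'
  rw [s.inner_PP_left B (s.τ u₀) ψ (s.DD_le_KK B hψ),
    s.inner_PP_right B (s.τ v₀) φ (s.DD_le_KK B hφ)]
  exact hzero


lemma mem_B_of_rel (B : H →ₗ.[ℂ] H) (hB : IsSelfAdjointPMap B)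
    (hBextS : ∀ u : s.A.domain, s.τ u = 0 →
      ∃ hu : (u : H) ∈ B.domain, B ⟨(u : H), hu⟩ = s.A u)
    (u₀ : s.A.domain) (φ : h) (hφ : φ ∈ s.DD B)
    (hrel : s.PP B (s.τ u₀) = (s.Theta B hB hBextS) ⟨φ, hφ⟩) :
    ∃ hu : (u₀ : H) + s.G s.lam0 φ ∈ B.domain,
      B ⟨(u₀ : H) + s.G s.lam0 φ, hu⟩
        = (s.A u₀ : H) + ((s.lam0 : ℝ) : ℂ) • s.G s.lam0 φ := by
  apply hB.2.2 ((u₀ : H) + s.G s.lam0 φ)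
    ((s.A u₀ : H) + ((s.lam0 : ℝ) : ℂ) • s.G s.lam0 φ)
  intro uB
  obtain ⟨v₀, χ, hdec, hact⟩ := s.B_decomp B hB hBextS uB
  have hχ : χ ∈ s.DD B := ⟨v₀, by rw [← hdec]; exact uB.2⟩
  have hp := s.pairing u₀ v₀ φ χ
  have hzero : ⟪s.τ u₀, χ⟫_ℂ - ⟪φ, s.τ v₀⟫_ℂ = 0 := by
    have e1 : ⟪s.τ u₀, χ⟫_ℂ = ⟪s.PP B (s.τ u₀), χ⟫_ℂ :=
      (s.inner_PP_left B (s.τ u₀) χ (s.DD_le_KK B hχ)).symm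
    have e2 : ⟪s.PP B (s.τ u₀), χ⟫_ℂ = ⟪(s.Theta B hB hBextS) ⟨φ, hφ⟩, χ⟫_ℂ := by rw [hrel]
    have e3 := s.theta_symm B hB hBextS φ χ hφ hχ
    have e4 : (s.Theta B hB hBextS) ⟨χ, hχ⟩ = s.PP B (s.τ v₀) :=
      s.Theta_spec B hB hBextS χ hχ v₀ (by rw [← hdec]; exact uB.2)
    have e5 : ⟪φ, s.PP B (s.τ v₀)⟫_ℂ = ⟪φ, s.τ v₀⟫_ℂ :=
      s.inner_PP_right B (s.τ v₀) φ (s.DD_le_KK B hφ)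
    rw [e1, e2, e3, e4, e5, sub_self]
  rw [hdec, hact]
  linear_combination hp + hzero

lemma theta_max (B : H →ₗ.[ℂ] H) (hB : IsSelfAdjointPMap B)
    (hBextS : ∀ u : s.A.domain, s.τ u = 0 →
      ∃ hu : (u : H) ∈ B.domain, B ⟨(u : H), hu⟩ = s.A u)
    (ψ w : h) (hψK : ψ ∈ s.KK B) (hwK : w ∈ s.KK B)
    (hyp : ∀ (φ : h) (hφ : φ ∈ s.DD B), ⟪ψ, (s.Theta B hB hBextS) ⟨φ, hφ⟩⟫_ℂ = ⟪w, φ⟫_ℂ) :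
    ∃ hψD : ψ ∈ s.DD B, (s.Theta B hB hBextS) ⟨ψ, hψD⟩ = w := by
  obtain ⟨u₁, hu₁⟩ := s.hτsurj w
  have hmem : ∃ hu : (u₁ : H) + s.G s.lam0 ψ ∈ B.domain,
      B ⟨(u₁ : H) + s.G s.lam0 ψ, hu⟩
        = (s.A u₁ : H) + ((s.lam0 : ℝ) : ℂ) • s.G s.lam0 ψ := by
    apply hB.2.2
    intro uB
    obtain ⟨v₀, χ, hdec, hact⟩ := s.B_decomp B hB hBextS uB
    have hχ : χ ∈ s.DD B := ⟨v₀, by rw [← hdec]; exact uB.2⟩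
    have hp := s.pairing u₁ v₀ ψ χ
    have hzero : ⟪s.τ u₁, χ⟫_ℂ - ⟪ψ, s.τ v₀⟫_ℂ = 0 := by
      have e4 : (s.Theta B hB hBextS) ⟨χ, hχ⟩ = s.PP B (s.τ v₀) :=
        s.Theta_spec B hB hBextS χ hχ v₀ (by rw [← hdec]; exact uB.2)
      have e5 : ⟪ψ, s.τ v₀⟫_ℂ = ⟪ψ, s.PP B (s.τ v₀)⟫_ℂ :=
        (s.inner_PP_right B (s.τ v₀) ψ hψK).symm
      rw [hu₁, e5, ← e4, hyp χ hχ, sub_self]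
    rw [hdec, hact]
    linear_combination hp + hzero
  obtain ⟨hu, _⟩ := hmem
  refine ⟨⟨u₁, hu⟩, ?_⟩
  exact (s.Theta_spec B hB hBextS ψ _ u₁ hu).trans (by rw [hu₁, s.PP_eq_self B hwK])


lemma M_eq {z : ℂ} {R : H →L[ℂ] H} (hz : IsResolvent s.A z R) (φ : h) :
    s.M z φ = s.τ ⟨s.G s.lam0 φ - s.G z φ, s.G_diff_mem hz φ⟩ := s.hM z φ _

/-- membership of `R x + G_z η` in the `u₀ + G φ` form, with the τ-computation. -/
lemma res_decomp (B : H →ₗ.[ℂ] H) {z : ℂ} {R : H →L[ℂ] H}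
    (hz : IsResolvent s.A z R) (x : H) (η : h) :
    ∃ (u₀ : s.A.domain), ((u₀ : H) = R x - (s.G s.lam0 η - s.G z η)) ∧
      (u₀ : H) + s.G s.lam0 η = R x + s.G z η ∧
      s.τ u₀ = s.tauR hz x - s.M z η := by
  refine ⟨⟨R x - (s.G s.lam0 η - s.G z η),
    s.A.domain.sub_mem (hz.1 x) (s.G_diff_mem hz η)⟩, rfl, by show R x - (s.G s.lam0 η - s.G z η) + s.G s.lam0 η = R x + s.G z η; abel, ?_⟩
  have hsub : (⟨R x - (s.G s.lam0 η - s.G z η),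
      s.A.domain.sub_mem (hz.1 x) (s.G_diff_mem hz η)⟩ : s.A.domain)
      = ⟨R x, hz.1 x⟩ - ⟨s.G s.lam0 η - s.G z η, s.G_diff_mem hz η⟩ := rfl
  rw [hsub, map_sub, ← s.M_eq hz η]
  rfl

/-- the key A-value computation: `A u₀` for `u₀ = R x - (G-G_z)η`. -/
lemma res_decomp_applyA {z : ℂ} {R : H →L[ℂ] H}
    (hz : IsResolvent s.A z R) (x : H) (η : h) (u₀ : s.A.domain)
    (hu₀ : (u₀ : H) = R x - (s.G s.lam0 η - s.G z η)) :
    (s.A u₀ : H) = (z • R x - x)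
      - (z - (s.lam0 : ℝ)) • (z • R (s.G s.lam0 η) - s.G s.lam0 η) := by
  have hdiff := s.G_diff_eq hz η
  have hsub : u₀ = (⟨R x, hz.1 x⟩ : s.A.domain)
      - (z - ((s.lam0 : ℝ) : ℂ)) • ⟨R (s.G s.lam0 η), hz.1 _⟩ := by
    apply Subtype.ext
    push_cast
    rw [hu₀, hdiff]
  rw [hsub, LinearPMap.map_sub, LinearPMap.map_smul]
  rw [applyA hz x (hz.1 x), applyA hz (s.G s.lam0 η) (hz.1 _)]

lemma B_kernel_zero (B : H →ₗ.[ℂ] H) (hB : IsSelfAdjointPMap B)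
    (hBextS : ∀ u : s.A.domain, s.τ u = 0 →
      ∃ hu : (u : H) ∈ B.domain, B ⟨(u : H), hu⟩ = s.A u)
    {z : ℂ} {R : H →L[ℂ] H} (hz : IsResolvent s.A z R)
    {W : h →L[ℂ] h} (hW : IsKreinInverse (s.PP B) (s.Theta B hB hBextS) (s.M z) W)
    (uB : B.domain) (h0 : -(B uB : H) + z • (uB : H) = 0) : (uB : H) = 0 := by
  obtain ⟨u₀, φ, hdec, hact⟩ := s.B_decomp B hB hBextS uB
  have hφD : φ ∈ s.DD B := ⟨u₀, by rw [← hdec]; exact uB.2⟩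
  have hθ : (s.Theta B hB hBextS) ⟨φ, hφD⟩ = s.PP B (s.τ u₀) :=
    s.Theta_spec B hB hBextS φ hφD u₀ (by rw [← hdec]; exact uB.2)
  -- from the kernel equation : (-A+z) u₀ = -(z-λ) G φ
  have h1 : -(s.A u₀ : H) + z • (u₀ : H) = -((z - ((s.lam0 : ℝ) : ℂ)) • s.G s.lam0 φ) := by
    rw [hdec, hact] at h0
    linear_combination (norm := module) h0
  have h2 : R (-(s.A u₀ : H) + z • (u₀ : H)) = (u₀ : H) := hz.2.2 u₀
  rw [h1] at h2
  have h3 : (u₀ : H) = -((s.G s.lam0 φ - s.G z φ)) := by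
    rw [← h2, s.G_diff_eq hz φ]
    rw [map_neg, map_smul]
  -- τ u₀ = - M z φ
  have hsub : u₀ = -(⟨s.G s.lam0 φ - s.G z φ, s.G_diff_mem hz φ⟩ : s.A.domain) :=
    Subtype.ext (by rw [h3]; rfl)
  have h4 : s.τ u₀ = -(s.M z φ) := by
    rw [hsub, map_neg, ← s.M_eq hz φ]
  have h5 : (s.Theta B hB hBextS) ⟨φ, hφD⟩ + s.PP B (s.M z φ) = 0 := by
    rw [hθ, h4, map_neg]; abel
  have h6 := hW.2.2 ⟨φ, hφD⟩
  rw [h5, map_zero] at h6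
  -- φ = 0
  have hφ0 : φ = 0 := h6.symm
  rw [hdec, h3, hφ0]
  simp

lemma krein_formula (B : H →ₗ.[ℂ] H) (hB : IsSelfAdjointPMap B)
    (hBextS : ∀ u : s.A.domain, s.τ u = 0 →
      ∃ hu : (u : H) ∈ B.domain, B ⟨(u : H), hu⟩ = s.A u)
    {z : ℂ} {R : H →L[ℂ] H} (hz : IsResolvent s.A z R)
    {W : h →L[ℂ] h} (hW : IsKreinInverse (s.PP B) (s.Theta B hB hBextS) (s.M z) W) :
    ∃ RB : H →L[ℂ] H, IsResolvent B z RB ∧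
      ∀ (x : H) (hx : R x ∈ s.A.domain),
        RB x = R x + s.G z (W (s.PP B (s.τ ⟨R x, hx⟩))) := by
  classical
  set RB : H →L[ℂ] H := R + (s.G z).comp (W.comp ((s.PP B).comp (s.tauR hz))) with hRB
  have hRBapp : ∀ x : H, RB x = R x + s.G z (W (s.PP B (s.tauR hz x))) := fun x => rfl
  -- for each x, the B-membership and value
  have hkey : ∀ x : H, ∃ hu : RB x ∈ B.domain,
      (B ⟨RB x, hu⟩ : H) = (s.A ⟨R x - (s.G s.lam0 (W (s.PP B (s.tauR hz x)))
          - s.G z (W (s.PP B (s.tauR hz x)))),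
          s.A.domain.sub_mem (hz.1 x) (s.G_diff_mem hz _)⟩ : H)
        + ((s.lam0 : ℝ) : ℂ) • s.G s.lam0 (W (s.PP B (s.tauR hz x))) := by
    intro x
    set η := W (s.PP B (s.tauR hz x)) with hη
    have hηD : η ∈ s.DD B := hW.1 (s.tauR hz x)
    obtain ⟨u₀, hu₀coe, hu₀sum, hu₀τ⟩ := s.res_decomp B hz x η
    have hu₀' : u₀ = ⟨R x - (s.G s.lam0 η - s.G z η),
        s.A.domain.sub_mem (hz.1 x) (s.G_diff_mem hz η)⟩ := Subtype.ext hu₀coe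
    have hrel : s.PP B (s.τ u₀) = (s.Theta B hB hBextS) ⟨η, hηD⟩ := by
      rw [hu₀τ, map_sub]
      have h2 : (s.Theta B hB hBextS) ⟨η, hηD⟩ + s.PP B (s.M z η)
          = s.PP B (s.tauR hz x) := hW.2.1 (s.tauR hz x) hηD
      linear_combination (norm := module) -h2
    obtain ⟨hu, hval⟩ := s.mem_B_of_rel B hB hBextS u₀ η hηD hrel
    have heq : (u₀ : H) + s.G s.lam0 η = RB x := by rw [hu₀sum, hRBapp]
    refine ⟨by rw [← heq]; exact hu, ?_⟩
    have hsubt : (⟨RB x, by rw [← heq]; exact hu⟩ : B.domain)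
        = ⟨(u₀ : H) + s.G s.lam0 η, hu⟩ := Subtype.ext heq.symm
    rw [hsubt, hval, hu₀']
  refine ⟨RB, ⟨fun x => (hkey x).1, ?_, ?_⟩, ?_⟩
  · -- (-B + z) RB x = x
    intro x hx
    set η := W (s.PP B (s.tauR hz x)) with hη
    obtain ⟨hu, hval⟩ := hkey x
    have hsubt : (⟨RB x, hx⟩ : B.domain) = ⟨RB x, hu⟩ := rfl
    rw [hsubt, hval]
    have hA1 := s.res_decomp_applyA hz x η
      ⟨R x - (s.G s.lam0 η - s.G z η), s.A.domain.sub_mem (hz.1 x) (s.G_diff_mem hz η)⟩ rfl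
    rw [hA1]
    have hGz : s.G z η = s.G s.lam0 η - (z - ((s.lam0 : ℝ) : ℂ)) • R (s.G s.lam0 η) := by
      have := s.G_diff_eq hz η
      linear_combination (norm := module) -this
    rw [hRBapp, ← hη, hGz]
    module
  · -- left inverse
    intro uB
    set y := -(B uB : H) + z • (uB : H) with hy
    obtain ⟨h1, _⟩ := hkey y
    set d : B.domain := ⟨RB y, h1⟩ - uB with hd
    have hBd : -(B d : H) + z • (d : H) = 0 := by
      have hv1 : -(B ⟨RB y, h1⟩ : H) + z • (RB y) = y := by
        obtain ⟨hu, hval⟩ := hkey y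
        have : (⟨RB y, h1⟩ : B.domain) = ⟨RB y, hu⟩ := rfl
        rw [this, hval]
        have hA1 := s.res_decomp_applyA hz y (W (s.PP B (s.tauR hz y)))
          ⟨R y - (s.G s.lam0 (W (s.PP B (s.tauR hz y)))
            - s.G z (W (s.PP B (s.tauR hz y)))),
            s.A.domain.sub_mem (hz.1 y) (s.G_diff_mem hz _)⟩ rfl
        rw [hA1]
        have hGz : s.G z (W (s.PP B (s.tauR hz y)))
            = s.G s.lam0 (W (s.PP B (s.tauR hz y)))
              - (z - ((s.lam0 : ℝ) : ℂ)) • R (s.G s.lam0 (W (s.PP B (s.tauR hz y)))) := by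
          have := s.G_diff_eq hz (W (s.PP B (s.tauR hz y)))
          linear_combination (norm := module) -this
        rw [hRBapp, hGz]
        module
      have hsub : (B d : H) = (B ⟨RB y, h1⟩ : H) - (B uB : H) := by
        rw [hd, LinearPMap.map_sub]
      have hdcoe : (d : H) = RB y - (uB : H) := rfl
      rw [hsub, hdcoe]
      have : -(B uB : H) + z • (uB : H) = y := rfl
      linear_combination (norm := module) hv1 - this
    have := s.B_kernel_zero B hB hBextS hz hW d hBd
    have hdcoe : (d : H) = RB y - (uB : H) := rfl
    rw [hdcoe] at this
    have : RB y = (uB : H) := by linear_combination (norm := module) this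
    exact this
  · -- the formula
    intro x hx
    rw [hRBapp]
    rfl


set_option maxHeartbeats 1000000 in
lemma nonreal_krein (B : H →ₗ.[ℂ] H) (hB : IsSelfAdjointPMap B)
    (hBextS : ∀ u : s.A.domain, s.τ u = 0 →
      ∃ hu : (u : H) ∈ B.domain, B ⟨(u : H), hu⟩ = s.A u)
    {z : ℂ} (hzim : z.im ≠ 0) :
    InResolventSet s.A z ∧
      ∃ W : h →L[ℂ] h, IsKreinInverse (s.PP B) (s.Theta B hB hBextS) (s.M z) W := by
  classical
  obtain ⟨R, hR⟩ := selfAdjoint_resolvent_nonreal s.hA hzim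
  obtain ⟨RB, hRB⟩ := selfAdjoint_resolvent_nonreal hB hzim
  refine ⟨⟨R, hR⟩, ?_⟩
  have hR' : IsResolvent s.A ((starRingEnd ℂ) z) (ContinuousLinearMap.adjoint R) :=
    adjoint_isResolvent s.hA hR
  -- injectivity of φ ↦ Θ φ + P M_z φ on dom Θ
  have hFinj : ∀ (φ : h) (hφ : φ ∈ s.DD B),
      ((s.Theta B hB hBextS) ⟨φ, hφ⟩ + s.PP B (s.M z φ) = 0) → φ = 0 := by
    intro φ hφ hF
    set dif : s.A.domain := ⟨s.G s.lam0 φ - s.G z φ, s.G_diff_mem hR φ⟩ with hdif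
    set u₀ : s.A.domain := -dif with hu₀
    have hτu₀ : s.τ u₀ = -(s.M z φ) := by rw [hu₀, map_neg, ← s.M_eq hR φ]
    have hrel : s.PP B (s.τ u₀) = (s.Theta B hB hBextS) ⟨φ, hφ⟩ := by
      rw [hτu₀, map_neg]
      linear_combination (norm := module) -hF
    obtain ⟨hu, hval⟩ := s.mem_B_of_rel B hB hBextS u₀ φ hφ hrel
    have hdifsub : dif = (z - ((s.lam0 : ℝ) : ℂ)) • (⟨R (s.G s.lam0 φ), hR.1 _⟩ : s.A.domain) :=
      Subtype.ext (s.G_diff_eq hR φ)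
    have hAdif : (s.A dif : H)
        = (z - ((s.lam0 : ℝ) : ℂ)) • (z • R (s.G s.lam0 φ) - s.G s.lam0 φ) := by
      rw [hdifsub, LinearPMap.map_smul, applyA hR _ (hR.1 _)]
    have hAu₀ : (s.A u₀ : H)
        = -((z - ((s.lam0 : ℝ) : ℂ)) • (z • R (s.G s.lam0 φ) - s.G s.lam0 φ)) := by
      rw [hu₀, LinearPMap.map_neg, hAdif]
    have hu₀coe : (u₀ : H) = -((z - ((s.lam0 : ℝ) : ℂ)) • R (s.G s.lam0 φ)) := by
      show -(s.G s.lam0 φ - s.G z φ) = -((z - ((s.lam0 : ℝ) : ℂ)) • R (s.G s.lam0 φ))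
      rw [s.G_diff_eq hR φ]
    have hv : -(B ⟨(u₀ : H) + s.G s.lam0 φ, hu⟩ : H) + z • ((u₀ : H) + s.G s.lam0 φ) = 0 := by
      rw [hval, hAu₀, hu₀coe]
      module
    have h0 := eq_zero_of_eigen_nonreal hB.2.1 hzim ⟨_, hu⟩ hv
    have hGz0 : s.G z φ = 0 := by
      have hcoe2 : (u₀ : H) + s.G s.lam0 φ = s.G z φ := by
        show -(s.G s.lam0 φ - s.G z φ) + s.G s.lam0 φ = s.G z φ
        abel
      rw [← hcoe2]
      exact h0
    exact s.G_inj hR' hGz0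
  -- choice of preimages under τ R
  obtain ⟨Cp, hCp, hpre⟩ := (s.tauR hR).exists_preimage_norm_le (s.tauR_surj hR)
  choose g hg1 hg2 using hpre
  -- W₀ : the G_z-preimage of R^B x - R x
  have hex : ∀ x : H, ∃ η : h, s.G z η = RB x - R x := by
    intro x
    apply s.mem_range_G hR'
    intro u hu
    obtain ⟨huB, hBu⟩ := hBextS u hu
    have e1 : ⟪RB x, -(s.A u : H) + (starRingEnd ℂ) z • (u : H)⟫_ℂ = ⟪x, (u : H)⟫_ℂ := by
      have hsy := hB.2.1 ⟨(u : H), huB⟩ ⟨RB x, hRB.1 x⟩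
      rw [hBu, applyA hRB x (hRB.1 x)] at hsy
      have hsy' := congrArg (starRingEnd ℂ) hsy
      rw [inner_conj_symm, inner_conj_symm] at hsy'
      rw [inner_add_right, inner_neg_right, inner_smul_right, hsy',
        inner_sub_left, inner_smul_left]
      ring
    have e2 : ⟪R x, -(s.A u : H) + (starRingEnd ℂ) z • (u : H)⟫_ℂ = ⟪x, (u : H)⟫_ℂ := by
      have hsy := s.hA.2.1 u ⟨R x, hR.1 x⟩
      rw [applyA hR x (hR.1 x)] at hsy
      have hsy' := congrArg (starRingEnd ℂ) hsy
      rw [inner_conj_symm, inner_conj_symm] at hsy'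
      rw [inner_add_right, inner_neg_right, inner_smul_right, hsy',
        inner_sub_left, inner_smul_left]
      ring
    rw [inner_sub_left, e1, e2, sub_self]
  choose W0 hW0 using hex
  have hGinj : ∀ {φ ψ : h}, s.G z φ = s.G z ψ → φ = ψ := by
    intro φ ψ hφψ
    have : s.G z (φ - ψ) = 0 := by rw [map_sub, hφψ, sub_self]
    have := s.G_inj hR' this
    exact sub_eq_zero.1 this
  have hW0add : ∀ x y : H, W0 (x + y) = W0 x + W0 y := by
    intro x y
    apply hGinj
    rw [map_add, hW0, hW0, hW0, map_add, map_add]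
    abel
  have hW0smul : ∀ (c : ℂ) (x : H), W0 (c • x) = c • W0 x := by
    intro c x
    apply hGinj
    rw [map_smul, hW0, hW0, map_smul, map_smul, smul_sub]
  have hW0zero : W0 0 = 0 := by
    apply hGinj
    rw [hW0, map_zero, map_zero, map_zero, sub_self]
  obtain ⟨c, hc, hbb⟩ := adjoint_bounded_below (s.tauR_surj hR')
  have hbbG : ∀ φ : h, ‖φ‖ ≤ c * ‖s.G z φ‖ := by
    intro φ
    rw [s.G_eq_adjoint hR']
    exact hbb φ
  have hW0bound : ∀ x : H, ‖W0 x‖ ≤ c * (‖RB‖ + ‖R‖) * ‖x‖ := by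
    intro x
    calc ‖W0 x‖ ≤ c * ‖s.G z (W0 x)‖ := hbbG _
      _ = c * ‖RB x - R x‖ := by rw [hW0]
      _ ≤ c * ((‖RB‖ + ‖R‖) * ‖x‖) := by
          apply mul_le_mul_of_nonneg_left _ hc.le
          calc ‖RB x - R x‖ ≤ ‖RB x‖ + ‖R x‖ := norm_sub_le _ _
            _ ≤ ‖RB‖ * ‖x‖ + ‖R‖ * ‖x‖ := add_le_add (RB.le_opNorm x) (R.le_opNorm x)
            _ = (‖RB‖ + ‖R‖) * ‖x‖ := by ring
      _ = c * (‖RB‖ + ‖R‖) * ‖x‖ := by ring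
  -- the key structural property of W₀
  have hstar : ∀ x : H, ∃ hη : W0 x ∈ s.DD B,
      (s.Theta B hB hBextS) ⟨W0 x, hη⟩ + s.PP B (s.M z (W0 x))
        = s.PP B (s.tauR hR x) := by
    intro x
    obtain ⟨u₀, hc1, hc2, hc3⟩ := s.res_decomp B hR x (W0 x)
    have hmem : (u₀ : H) + s.G s.lam0 (W0 x) ∈ B.domain := by
      rw [hc2, hW0 x]
      have heq : R x + (RB x - R x) = RB x := by abel
      rw [heq]
      exact hRB.1 x
    have hη : W0 x ∈ s.DD B := ⟨u₀, hmem⟩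
    refine ⟨hη, ?_⟩
    rw [s.Theta_spec B hB hBextS _ hη u₀ hmem, hc3, map_sub]
    abel
  have hW0ker : ∀ x : H, s.tauR hR x = 0 → W0 x = 0 := by
    intro x hx
    obtain ⟨hη, hs⟩ := hstar x
    rw [hx, map_zero] at hs
    exact hFinj (W0 x) hη hs
  -- define W
  have hWadd : ∀ ξ ζ : h, W0 (g (ξ + ζ)) = W0 (g ξ) + W0 (g ζ) := by
    intro ξ ζ
    have hdk : s.tauR hR (g (ξ + ζ) - g ξ - g ζ) = 0 := by
      rw [map_sub, map_sub, hg1, hg1, hg1]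
      abel
    have hd0 := hW0ker _ hdk
    have hga : g (ξ + ζ) = (g ξ + g ζ) + (g (ξ + ζ) - g ξ - g ζ) := by abel
    rw [hga, hW0add, hW0add, hd0, add_zero]
  have hWsmul : ∀ (a : ℂ) (ξ : h), W0 (g (a • ξ)) = a • W0 (g ξ) := by
    intro a ξ
    have hdk : s.tauR hR (g (a • ξ) - a • g ξ) = 0 := by
      rw [map_sub, map_smul, hg1, hg1]
      abel
    have hd0 := hW0ker _ hdk
    have hga : g (a • ξ) = a • g ξ + (g (a • ξ) - a • g ξ) := by abel
    rw [hga, hW0add, hd0, add_zero, hW0smul]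
  set W : h →L[ℂ] h := LinearMap.mkContinuous
    { toFun := fun ξ => W0 (g ξ)
      map_add' := hWadd
      map_smul' := fun a ξ => hWsmul a ξ }
    (c * (‖RB‖ + ‖R‖) * Cp)
    (by
      intro ξ
      calc ‖W0 (g ξ)‖ ≤ c * (‖RB‖ + ‖R‖) * ‖g ξ‖ := hW0bound _
        _ ≤ c * (‖RB‖ + ‖R‖) * (Cp * ‖ξ‖) := by
            apply mul_le_mul_of_nonneg_left (hg2 ξ)
            positivity
        _ = c * (‖RB‖ + ‖R‖) * Cp * ‖ξ‖ := by ring) with hW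
  have hWapp : ∀ ξ : h, W ξ = W0 (g ξ) := fun ξ => rfl
  refine ⟨W, ?_, ?_, ?_⟩
  · intro ξ
    exact (hstar (g (s.PP B ξ))).1
  · intro ξ hx
    obtain ⟨hη, hs⟩ := hstar (g (s.PP B ξ))
    have e0 : (⟨W (s.PP B ξ), hx⟩ : (s.Theta B hB hBextS).domain)
        = ⟨W0 (g (s.PP B ξ)), hη⟩ := Subtype.ext rfl
    have e1 : W (s.PP B ξ) = W0 (g (s.PP B ξ)) := rfl
    rw [e0, e1, hs, hg1]
    exact s.PP_eq_self B (s.PP_mem B ξ)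
  · intro φ
    set ξ : h := (s.Theta B hB hBextS) φ + s.PP B (s.M z (φ : h)) with hξ
    have hξK : ξ ∈ s.KK B :=
      (s.KK B).add_mem (s.Theta_mem_KK B hB hBextS φ) (s.PP_mem B _)
    have hPξ : s.PP B ξ = ξ := s.PP_eq_self B hξK
    obtain ⟨hη, hs⟩ := hstar (g ξ)
    rw [hg1, hPξ] at hs
    have hφD : (φ : h) ∈ s.DD B := φ.2
    have hdmem : W0 (g ξ) - (φ : h) ∈ s.DD B := (s.DD B).sub_mem hη hφD
    have hdF : (s.Theta B hB hBextS) ⟨W0 (g ξ) - (φ : h), hdmem⟩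
        + s.PP B (s.M z (W0 (g ξ) - (φ : h))) = 0 := by
      have hsplit : (⟨W0 (g ξ) - (φ : h), hdmem⟩ : (s.Theta B hB hBextS).domain)
          = ⟨W0 (g ξ), hη⟩ - ⟨(φ : h), hφD⟩ := rfl
      have hφeq : (⟨(φ : h), hφD⟩ : (s.Theta B hB hBextS).domain) = φ := Subtype.ext rfl
      rw [hsplit, LinearPMap.map_sub, hφeq, map_sub, map_sub]
      linear_combination (norm := module) hs + hξ
    have hd0 := hFinj _ hdmem hdF
    have hfin : W0 (g ξ) = (φ : h) := sub_eq_zero.1 hd0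
    show W0 (g ξ) = (φ : h)
    exact hfin

end Setup

end KreinAux

open KreinAux in
set_option maxHeartbeats 1000000 in
theorem statement_0
    (A : H →ₗ.[ℂ] H) (hA : IsSelfAdjointPMap A)
    (τ : A.domain →ₗ[ℂ] h)
    (hτcont : ∃ C : ℝ, ∀ u : A.domain, ‖τ u‖ ≤ C * (‖(u : H)‖ + ‖A u‖))
    (hτsurj : Function.Surjective τ)
    (hkerdense : Dense {x : H | ∃ u : A.domain, (u : H) = x ∧ τ u = 0})
    -- a real point `λ₀ ∈ ρ(A)`
    (lam0 : ℝ) (hlam0 : InResolventSet A (lam0 : ℂ))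
    -- the family `G_z = (τ R_{z̄})'`, identified with maps `h → H`:
    (G : ℂ → h →L[ℂ] H)
    (hG : ∀ (z : ℂ) (R : H →L[ℂ] H), IsResolvent A (starRingEnd ℂ z) R →
      ∀ (φ : h) (x : H) (hx : R x ∈ A.domain),
        ⟪G z φ, x⟫_ℂ = ⟪φ, τ ⟨R x, hx⟩⟫_ℂ)
    -- the Weyl family `M_z := τ (G - G_z)`:
    (M : ℂ → h →L[ℂ] h)
    (hM : ∀ (z : ℂ) (φ : h) (hmem : G lam0 φ - G z φ ∈ A.domain),
      M z φ = τ ⟨G lam0 φ - G z φ, hmem⟩)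
    -- `B`: an arbitrary self-adjoint extension of `S := A | ker τ`
    (B : H →ₗ.[ℂ] H) (hB : IsSelfAdjointPMap B)
    (hBextS : ∀ u : A.domain, τ u = 0 →
      ∃ hu : (u : H) ∈ B.domain, B ⟨(u : H), hu⟩ = A u) :
    ∃ (P : h →L[ℂ] h) (Θ : h →ₗ.[ℂ] h),
      IsOrthProjection P ∧
      IsSelfAdjointIn (LinearMap.range (P : h →ₗ[ℂ] h)) Θ ∧
      -- `B = A_{Π,Θ}`: description of the domain and of the action
      (∀ u : B.domain, ∃ (u₀ : H) (hu₀ : u₀ ∈ A.domain) (φ : h) (hφ : φ ∈ Θ.domain),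
        (u : H) = u₀ + G lam0 φ ∧ P (τ ⟨u₀, hu₀⟩) = Θ ⟨φ, hφ⟩ ∧
        B u = A ⟨u₀, hu₀⟩ + (lam0 : ℂ) • G lam0 φ) ∧
      (∀ (u₀ : H) (hu₀ : u₀ ∈ A.domain) (φ : h) (hφ : φ ∈ Θ.domain),
        P (τ ⟨u₀, hu₀⟩) = Θ ⟨φ, hφ⟩ →
        ∃ hu : u₀ + G lam0 φ ∈ B.domain,
          B ⟨u₀ + G lam0 φ, hu⟩ = A ⟨u₀, hu₀⟩ + (lam0 : ℂ) • G lam0 φ) ∧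
      -- `Z_{Π,Θ}` is not void
      (∃ z : ℂ, InKreinSet A P Θ M z) ∧
      -- `ℂ \ ℝ ⊆ Z_{Π,Θ}`
      (∀ z : ℂ, z.im ≠ 0 → InKreinSet A P Θ M z) ∧
      -- `Z_{Π,Θ} ⊆ ρ(A_{Π,Θ})` together with the Kreĭn resolvent formula
      (∀ z : ℂ, InKreinSet A P Θ M z →
        ∀ (R : H →L[ℂ] H), IsResolvent A z R →
        ∀ (W : h →L[ℂ] h), IsKreinInverse P Θ (M z) W →
        ∃ RB : H →L[ℂ] H, IsResolvent B z RB ∧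
          ∀ (x : H) (hx : R x ∈ A.domain),
            RB x = R x + G z (W (P (τ ⟨R x, hx⟩)))) := by
  classical
  obtain ⟨R0, hR0⟩ := hlam0
  let s : Setup H h :=
    { A := A, hA := hA, τ := τ, hτcont := hτcont, hτsurj := hτsurj,
      hkerdense := hkerdense, lam0 := lam0, G := G, hG := hG, M := M, hM := hM,
      R0 := R0, hR0 := hR0 }
  refine ⟨s.PP B, s.Theta B hB hBextS, ⟨?_, ?_⟩, ⟨?_, ?_, ?_, ?_, ?_⟩, ?_, ?_, ?_, ?_, ?_⟩
  · -- idempotent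
    apply ContinuousLinearMap.ext
    intro x
    show s.PP B (s.PP B x) = s.PP B x
    exact s.PP_eq_self B (s.PP_mem B x)
  · exact fun x y => s.PP_inner_left_right B x y
  · -- dom Θ ≤ ran P
    rw [s.range_PP B]
    exact s.DD_le_KK B
  · intro φ
    rw [s.range_PP B]
    exact s.Theta_mem_KK B hB hBextS φ
  · intro x hx
    rw [s.range_PP B] at hx
    exact hx
  · intro φ ψ
    exact s.theta_symm B hB hBextS φ.1 ψ.1 φ.2 ψ.2
  · intro ψ hψ w hw hyp
    rw [s.range_PP B] at hψ hw
    exact s.theta_max B hB hBextS ψ w hψ hw (fun φ hφ => hyp ⟨φ, hφ⟩)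
  · -- description of dom B
    intro u
    obtain ⟨u₀, φ, hdec, hact⟩ := s.B_decomp B hB hBextS u
    have hmem : (u₀ : H) + s.G s.lam0 φ ∈ B.domain := by rw [← hdec]; exact u.2
    have hφD : φ ∈ s.DD B := ⟨u₀, hmem⟩
    exact ⟨(u₀ : H), u₀.2, φ, hφD, hdec,
      (s.Theta_spec B hB hBextS φ hφD u₀ hmem).symm, hact⟩
  · -- converse
    intro u₀ hu₀ φ hφ hrel
    exact s.mem_B_of_rel B hB hBextS ⟨u₀, hu₀⟩ φ hφ hrel
  · -- Z nonempty
    refine ⟨Complex.I, ?_⟩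
    have : (Complex.I).im ≠ 0 := by simp
    exact s.nonreal_krein B hB hBextS this
  · -- nonreal points
    intro z hz
    exact s.nonreal_krein B hB hBextS hz
  · -- Krein formula
    intro z _ R hR W hW
    exact s.krein_formula B hB hBextS hR hW

end
end

section
/- The adjoint of S := A|ker(τ) is given by dom(S*) = {u = u₀ + Gφ : u₀ ∈ dom(A), φ ∈ h′}, with S*u = Au₀ + λ₀ Gφ; moreover for every z ∈ ρ(A) one has ker(S* − z) = {G_z φ : φ ∈ h′}. -/
/-!
STATEMENT 1 (Lemma `adj` of the paper).

Setting as in the paper, Section 2: `A` self-adjoint in the Hilbert space `H`,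
`τ : dom A → h` continuous w.r.t. the graph norm, surjective, with dense kernel,
`S := A | ker τ`, `λ₀ ∈ ρ(A) ∩ ℝ`, `R_z = (-A+z)⁻¹`, `G_z := (τ R_{z̄})'` and
`G := G_{λ₀}` (the dual space `h'` is identified with `h` via the duality map).

Conclusion: `dom S* = {u₀ + Gφ : u₀ ∈ dom A, φ ∈ h'}`, `S*(u₀ + Gφ) = A u₀ + λ₀ Gφ`,
and for every `z ∈ ρ(A)`, `ker (S* - z) = ran G_z`.
-/

open scoped InnerProductSpace
open Filter Topology

section
variable {H : Type*} [NormedAddCommGroup H] [InnerProductSpace ℂ H] [CompleteSpace H]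

/-- `T` is the adjoint of `S`:  `dom T = {ψ : ∃ w, ∀ u ∈ dom S, ⟪ψ, S u⟫ = ⟪w, u⟫}`
and `⟪ψ, S u⟫ = ⟪T ψ, u⟫` for all `ψ ∈ dom T`, `u ∈ dom S`. -/
def IsAdjointOf (S T : H →ₗ.[ℂ] H) : Prop :=
  (∀ ψ : H, (ψ ∈ T.domain ↔ ∃ w : H, ∀ u : S.domain, ⟪ψ, S u⟫_ℂ = ⟪w, (u : H)⟫_ℂ)) ∧
  (∀ ψ : T.domain, ∀ u : S.domain, ⟪(ψ : H), S u⟫_ℂ = ⟪T ψ, (u : H)⟫_ℂ)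

set_option linter.unusedSectionVars false in
lemma resolventA {A : H →ₗ.[ℂ] H} {z : ℂ} {R : H →L[ℂ] H} (hR : IsResolvent A z R)
    (x : H) (hx : R x ∈ A.domain) : A ⟨R x, hx⟩ = z • R x - x := by
  have h := hR.2.1 x hx
  set a := A ⟨R x, hx⟩ with ha
  set b := z • R x with hb
  rw [← h]; abel

set_option linter.unusedSectionVars false in
lemma resolventRA {A : H →ₗ.[ℂ] H} {z : ℂ} {R : H →L[ℂ] H} (hR : IsResolvent A z R)
    (u : A.domain) : R (A u) = z • R (u : H) - (u : H) := by
  have h := hR.2.2 u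
  rw [map_add, map_neg, map_smul] at h
  set a := R (A u) with ha
  set b := z • R (u : H) with hb
  rw [← h]; abel

lemma adjoint_isResolvent {A : H →ₗ.[ℂ] H} (hA : IsSelfAdjointPMap A) {z : ℂ} {R : H →L[ℂ] H}
    (hR : IsResolvent A z R) :
    IsResolvent A (starRingEnd ℂ z) (ContinuousLinearMap.adjoint R) := by
  set R' := ContinuousLinearMap.adjoint R with hR'def
  have key : ∀ x : H, ∃ hx : R' x ∈ A.domain,
      A ⟨R' x, hx⟩ = (starRingEnd ℂ z) • R' x - x := by
    intro x
    apply hA.2.2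
    intro u
    rw [hR'def, ContinuousLinearMap.adjoint_inner_left, resolventRA hR u, inner_sub_right,
      inner_smul_right, inner_sub_left, inner_smul_left, Complex.conj_conj,
      ContinuousLinearMap.adjoint_inner_left]
  refine ⟨fun x => (key x).choose, fun x hx => ?_, fun u => ?_⟩
  · have h := (key x).choose_spec
    have h2 : A ⟨R' x, hx⟩ = (starRingEnd ℂ z) • R' x - x := h
    rw [h2]; abel
  · apply ext_inner_right ℂ
    intro v
    rw [hR'def, ContinuousLinearMap.adjoint_inner_left, inner_add_left, inner_neg_left,
      inner_smul_left, Complex.conj_conj]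
    have h1 : ⟪A u, R v⟫_ℂ = ⟪(u : H), A ⟨R v, hR.1 v⟩⟫_ℂ := hA.2.1 u ⟨R v, hR.1 v⟩
    rw [h1, resolventA hR v (hR.1 v), inner_sub_right, inner_smul_right]
    ring


theorem statement_1
    {h : Type*} [NormedAddCommGroup h] [InnerProductSpace ℂ h] [CompleteSpace h]
    (A : H →ₗ.[ℂ] H) (hA : IsSelfAdjointPMap A)
    (τ : A.domain →ₗ[ℂ] h)
    (hτcont : ∃ C : ℝ, ∀ u : A.domain, ‖τ u‖ ≤ C * (‖(u : H)‖ + ‖A u‖))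
    (hτsurj : Function.Surjective τ)
    (hkerdense : Dense {x : H | ∃ u : A.domain, (u : H) = x ∧ τ u = 0})
    -- a real point `λ₀ ∈ ρ(A)`
    (lam0 : ℝ) (hlam0 : InResolventSet A (lam0 : ℂ))
    -- the family `G_z = (τ R_{z̄})'`, identified with maps `h → H`:
    (G : ℂ → h →L[ℂ] H)
    (hG : ∀ (z : ℂ) (R : H →L[ℂ] H), IsResolvent A (starRingEnd ℂ z) R →
      ∀ (φ : h) (x : H) (hx : R x ∈ A.domain),
        ⟪G z φ, x⟫_ℂ = ⟪φ, τ ⟨R x, hx⟩⟫_ℂ)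
    -- `S := A | ker τ`
    (S : H →ₗ.[ℂ] H)
    (hSdom : ∀ x : H, x ∈ S.domain ↔ ∃ hx : x ∈ A.domain, τ ⟨x, hx⟩ = 0)
    (hSval : ∀ (u : S.domain) (hu : (u : H) ∈ A.domain), S u = A ⟨(u : H), hu⟩)
    -- `T = S*`
    (T : H →ₗ.[ℂ] H) (hT : IsAdjointOf S T) :
    -- `dom S* = {u₀ + G φ}` with `S* (u₀ + G φ) = A u₀ + λ₀ G φ`
    (∀ u : T.domain, ∃ (u₀ : H) (hu₀ : u₀ ∈ A.domain) (φ : h),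
        (u : H) = u₀ + G lam0 φ ∧ T u = A ⟨u₀, hu₀⟩ + (lam0 : ℂ) • G lam0 φ) ∧
    (∀ (u₀ : H) (hu₀ : u₀ ∈ A.domain) (φ : h),
        ∃ hu : u₀ + G lam0 φ ∈ T.domain,
          T ⟨u₀ + G lam0 φ, hu⟩ = A ⟨u₀, hu₀⟩ + (lam0 : ℂ) • G lam0 φ) ∧
    -- `ker (S* - z) = ran G_z` for every `z ∈ ρ(A)`
    (∀ z : ℂ, InResolventSet A z →
      (∀ u : T.domain, T u = z • (u : H) → ∃ φ : h, (u : H) = G z φ) ∧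
      (∀ φ : h, ∃ hm : G z φ ∈ T.domain, T ⟨G z φ, hm⟩ = z • G z φ)) := by
  classical
  obtain ⟨R₀, hR₀⟩ := hlam0
  have hR₀' : IsResolvent A (starRingEnd ℂ (lam0 : ℂ)) R₀ := by
    rwa [Complex.conj_ofReal]
  -- `S.domain` is dense
  have hdense : Dense ((S.domain : Submodule ℂ H) : Set H) := by
    have hset : {x : H | ∃ u : A.domain, (u : H) = x ∧ τ u = 0} = (S.domain : Set H) := by
      ext x
      constructor
      · rintro ⟨u, rfl, hτ⟩
        exact (hSdom u).2 ⟨u.2, hτ⟩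
      · intro hx
        obtain ⟨hxA, hτ⟩ := (hSdom x).1 hx
        exact ⟨⟨x, hxA⟩, rfl, hτ⟩
    rw [← hset]
    exact hkerdense
  have uniq : ∀ a b : H, (∀ u : S.domain, ⟪a, (u : H)⟫_ℂ = ⟪b, (u : H)⟫_ℂ) → a = b :=
    fun a b hab => hdense.eq_of_inner_left ℂ fun v hv => hab ⟨v, hv⟩
  -- membership in `dom T` with prescribed value
  have memT : ∀ (ψ w : H), (∀ u : S.domain, ⟪ψ, S u⟫_ℂ = ⟪w, (u : H)⟫_ℂ) →
      ∃ hm : ψ ∈ T.domain, T ⟨ψ, hm⟩ = w := by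
    intro ψ w hw
    have hm : ψ ∈ T.domain := (hT.1 ψ).2 ⟨w, hw⟩
    exact ⟨hm, uniq _ _ fun u => (hT.2 ⟨ψ, hm⟩ u).symm.trans (hw u)⟩
  -- `dom A ⊆ dom T` with `T = A` there
  have memT_A : ∀ (u₀ : H) (hu₀ : u₀ ∈ A.domain),
      ∃ hm : u₀ ∈ T.domain, T ⟨u₀, hm⟩ = A ⟨u₀, hu₀⟩ := by
    intro u₀ hu₀
    apply memT
    intro u
    obtain ⟨hu, hτu⟩ := (hSdom u).1 u.2
    rw [hSval u hu]
    exact (hA.2.1 ⟨u₀, hu₀⟩ ⟨(u : H), hu⟩).symm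
  -- `G z φ` is an eigenvector of `T` for `z`
  have eigen : ∀ (z : ℂ) (R : H →L[ℂ] H), IsResolvent A (starRingEnd ℂ z) R → ∀ φ : h,
      ∃ hm : G z φ ∈ T.domain, T ⟨G z φ, hm⟩ = z • G z φ := by
    intro z R hR φ
    apply memT
    intro u
    obtain ⟨hu, hτu⟩ := (hSdom u).1 u.2
    rw [hSval u hu, hG z R hR φ (A ⟨(u : H), hu⟩) (hR.1 _)]
    have hsub : (⟨R (A ⟨(u : H), hu⟩), hR.1 _⟩ : A.domain)
        = (starRingEnd ℂ z) • ⟨R (u : H), hR.1 (u : H)⟩ - ⟨(u : H), hu⟩ :=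
      Subtype.ext (by simpa using resolventRA hR ⟨(u : H), hu⟩)
    rw [hsub, map_sub, map_smul, hτu, sub_zero, inner_smul_right, inner_smul_left,
      hG z R hR φ (u : H) (hR.1 (u : H))]
  -- kernel of `T - z` is contained in the range of `G z`
  have kerG : ∀ (z : ℂ) (R : H →L[ℂ] H), IsResolvent A (starRingEnd ℂ z) R →
      ∀ u : T.domain, T u = z • (u : H) → ∃ φ : h, (u : H) = G z φ := by
    intro z R hR u hTu
    obtain ⟨C, hC⟩ := hτcont
    -- the continuous map `M = τ ∘ R`
    let M₀ : H →ₗ[ℂ] h :=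
      { toFun := fun x => τ ⟨R x, hR.1 x⟩
        map_add' := fun x y => by
          have hxy : (⟨R (x + y), hR.1 _⟩ : A.domain) = ⟨R x, hR.1 x⟩ + ⟨R y, hR.1 y⟩ :=
            Subtype.ext (by simp)
          show τ ⟨R (x + y), hR.1 _⟩ = τ ⟨R x, hR.1 x⟩ + τ ⟨R y, hR.1 y⟩
          rw [hxy, map_add]
        map_smul' := fun c x => by
          have hcx : (⟨R (c • x), hR.1 _⟩ : A.domain) = c • ⟨R x, hR.1 x⟩ :=
            Subtype.ext (by simp)
          show τ ⟨R (c • x), hR.1 _⟩ = c • τ ⟨R x, hR.1 x⟩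
          rw [hcx, map_smul] }
    have hM₀bound : ∀ x : H,
        ‖M₀ x‖ ≤ (|C| * (‖R‖ + (‖z‖ * ‖R‖ + 1))) * ‖x‖ := by
      intro x
      have hAx : A ⟨R x, hR.1 x⟩ = (starRingEnd ℂ z) • R x - x := resolventA hR x (hR.1 x)
      have h1 : ‖R x‖ ≤ ‖R‖ * ‖x‖ := R.le_opNorm x
      have h2 : ‖A (⟨R x, hR.1 x⟩ : A.domain)‖ ≤ ‖z‖ * (‖R‖ * ‖x‖) + ‖x‖ := by
        rw [hAx]
        calc ‖(starRingEnd ℂ z) • R x - x‖ ≤ ‖(starRingEnd ℂ z) • R x‖ + ‖x‖ := norm_sub_le _ _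
          _ = ‖z‖ * ‖R x‖ + ‖x‖ := by rw [norm_smul, RCLike.norm_conj]
          _ ≤ ‖z‖ * (‖R‖ * ‖x‖) + ‖x‖ := by
              have := mul_le_mul_of_nonneg_left h1 (norm_nonneg z)
              linarith
      calc ‖M₀ x‖ = ‖τ ⟨R x, hR.1 x⟩‖ := rfl
        _ ≤ C * (‖R x‖ + ‖A (⟨R x, hR.1 x⟩ : A.domain)‖) := hC _
        _ ≤ |C| * (‖R x‖ + ‖A (⟨R x, hR.1 x⟩ : A.domain)‖) :=
            mul_le_mul_of_nonneg_right (le_abs_self C) (by positivity)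
        _ ≤ |C| * (‖R‖ * ‖x‖ + (‖z‖ * (‖R‖ * ‖x‖) + ‖x‖)) := by
            have hadd : ‖R x‖ + ‖A (⟨R x, hR.1 x⟩ : A.domain)‖
                ≤ ‖R‖ * ‖x‖ + (‖z‖ * (‖R‖ * ‖x‖) + ‖x‖) := by linarith
            exact mul_le_mul_of_nonneg_left hadd (abs_nonneg C)
        _ = (|C| * (‖R‖ + (‖z‖ * ‖R‖ + 1))) * ‖x‖ := by ring
    let M : H →L[ℂ] h := M₀.mkContinuous _ hM₀bound
    have hMapp : ∀ x : H, M x = τ ⟨R x, hR.1 x⟩ := fun _ => rfl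
    have hMsurj : Function.Surjective M := by
      intro η
      obtain ⟨v, hv⟩ := hτsurj η
      refine ⟨-(A v) + (starRingEnd ℂ z) • (v : H), ?_⟩
      rw [hMapp]
      have he : (⟨R (-(A v) + (starRingEnd ℂ z) • (v : H)), hR.1 _⟩ : A.domain) = v :=
        Subtype.ext (hR.2.2 v)
      rw [he, hv]
    -- the functional vanishes on `ker M`
    have hker0 : ∀ x : H, M x = 0 → ⟪(u : H), x⟫_ℂ = 0 := by
      intro x hx
      have hRxS : R x ∈ S.domain := (hSdom (R x)).2 ⟨hR.1 x, by rw [← hMapp]; exact hx⟩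
      have hSRx : S ⟨R x, hRxS⟩ = A ⟨R x, hR.1 x⟩ := hSval ⟨R x, hRxS⟩ (hR.1 x)
      have h1 : ⟪(u : H), A ⟨R x, hR.1 x⟩⟫_ℂ = (starRingEnd ℂ z) * ⟪(u : H), R x⟫_ℂ := by
        rw [← hSRx, hT.2 u ⟨R x, hRxS⟩, hTu, inner_smul_left]
      have h2 : ⟪(u : H), -(A ⟨R x, hR.1 x⟩) + (starRingEnd ℂ z) • R x⟫_ℂ = 0 := by
        rw [inner_add_right, inner_neg_right, h1, inner_smul_right]
        ring
      have h4 := congrArg (fun y => ⟪(u : H), y⟫_ℂ) (hR.2.1 x (hR.1 x))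
      exact h4.symm.trans h2
    have hwd : ∀ x y : H, M x = M y → ⟪(u : H), x⟫_ℂ = ⟪(u : H), y⟫_ℂ := by
      intro x y hxy
      have h := hker0 (x - y) (by rw [map_sub, hxy, sub_self])
      rw [inner_sub_right] at h
      exact sub_eq_zero.mp h
    -- the representing functional
    let s : h → H := Function.surjInv hMsurj
    have hs : ∀ η : h, M (s η) = η := fun η => Function.surjInv_eq hMsurj η
    let ℓ₀ : h →ₗ[ℂ] ℂ :=
      { toFun := fun η => ⟪(u : H), s η⟫_ℂ
        map_add' := fun a b => by
          show ⟪(u : H), s (a + b)⟫_ℂ = ⟪(u : H), s a⟫_ℂ + ⟪(u : H), s b⟫_ℂ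
          rw [hwd (s (a + b)) (s a + s b) (by rw [map_add, hs, hs, hs]), inner_add_right]
        map_smul' := fun c a => by
          show ⟪(u : H), s (c • a)⟫_ℂ = c • ⟪(u : H), s a⟫_ℂ
          rw [hwd (s (c • a)) (c • s a) (by rw [map_smul, hs, hs]), inner_smul_right,
            smul_eq_mul] }
    obtain ⟨C₂, hC₂pos, hC₂⟩ := M.exists_preimage_norm_le hMsurj
    have hℓbound : ∀ η : h, ‖ℓ₀ η‖ ≤ (‖(u : H)‖ * C₂) * ‖η‖ := by
      intro η
      obtain ⟨x, hx, hnx⟩ := hC₂ η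
      have heq : ℓ₀ η = ⟪(u : H), x⟫_ℂ := hwd _ _ (by rw [hs, hx])
      rw [heq]
      calc ‖⟪(u : H), x⟫_ℂ‖ ≤ ‖(u : H)‖ * ‖x‖ := norm_inner_le_norm _ _
        _ ≤ ‖(u : H)‖ * (C₂ * ‖η‖) := mul_le_mul_of_nonneg_left hnx (norm_nonneg _)
        _ = (‖(u : H)‖ * C₂) * ‖η‖ := by ring
    let ℓ : h →L[ℂ] ℂ := ℓ₀.mkContinuous _ hℓbound
    refine ⟨(InnerProductSpace.toDual ℂ h).symm ℓ, ?_⟩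
    apply ext_inner_right ℂ
    intro x
    rw [hG z R hR _ x (hR.1 x), InnerProductSpace.toDual_symm_apply]
    show ⟪(u : H), x⟫_ℂ = ⟪(u : H), s (M x)⟫_ℂ
    exact hwd x (s (M x)) (by rw [hs])
  refine ⟨?_, ?_, ?_⟩
  · -- part 1
    intro u
    set u₀ : H := R₀ ((lam0 : ℂ) • (u : H) - T u) with hu₀def
    have hu₀A : u₀ ∈ A.domain := hR₀.1 _
    have hAu₀ : A ⟨u₀, hu₀A⟩
        = (lam0 : ℂ) • u₀ - ((lam0 : ℂ) • (u : H) - T u) := resolventA hR₀ _ _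
    obtain ⟨hm₀, hval₀⟩ := memT_A u₀ hu₀A
    have hvmem : (u : H) - u₀ ∈ T.domain := sub_mem u.2 hm₀
    have hueq : u = ⟨u₀, hm₀⟩ + ⟨(u : H) - u₀, hvmem⟩ := Subtype.ext (by simp)
    have hTv : T ⟨(u : H) - u₀, hvmem⟩ = (lam0 : ℂ) • ((u : H) - u₀) := by
      have hsplit : (⟨(u : H) - u₀, hvmem⟩ : T.domain) = u - ⟨u₀, hm₀⟩ := Subtype.ext (by simp)
      rw [hsplit, T.map_sub, hval₀, hAu₀, smul_sub]
      abel
    obtain ⟨φ, hφ⟩ := kerG (lam0 : ℂ) R₀ hR₀' ⟨(u : H) - u₀, hvmem⟩ hTv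
    have hφ' : (u : H) - u₀ = G (lam0 : ℂ) φ := hφ
    refine ⟨u₀, hu₀A, φ, ?_, ?_⟩
    · rw [← hφ']; abel
    · have hTsplit : T u = T ⟨u₀, hm₀⟩ + T ⟨(u : H) - u₀, hvmem⟩ := by
        conv_lhs => rw [hueq]
        exact T.map_add _ _
      rw [hTsplit, hval₀, hTv, hφ']
  · -- part 2
    intro u₀ hu₀ φ
    obtain ⟨hm₀, hval₀⟩ := memT_A u₀ hu₀
    obtain ⟨hmG, hvalG⟩ := eigen (lam0 : ℂ) R₀ hR₀' φ
    have hm : u₀ + G (lam0 : ℂ) φ ∈ T.domain := add_mem hm₀ hmG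
    refine ⟨hm, ?_⟩
    have hsplit : (⟨u₀ + G (lam0 : ℂ) φ, hm⟩ : T.domain)
        = ⟨u₀, hm₀⟩ + ⟨G (lam0 : ℂ) φ, hmG⟩ := rfl
    rw [hsplit, T.map_add, hval₀, hvalG]
  · -- part 3
    intro z hz
    obtain ⟨Rz, hRz⟩ := hz
    have hRz' : IsResolvent A (starRingEnd ℂ z) (ContinuousLinearMap.adjoint Rz) :=
      adjoint_isResolvent hA hRz
    exact ⟨fun u hu => kerG z _ hRz' u hu, fun φ => eigen z _ hRz' φ⟩

end
end

section
/- Given a linear operator Ξ : dom(Ξ) ⊆ ran(Π′) → ran(Π), define A_{Π,Ξ} := S*|dom(A_{Π,Ξ}) with dom(A_{Π,Ξ}) := {u ∈ dom(S*) : β₀u ∈ dom(Ξ), Π β₁u = Ξ β₀u}. Then A_{Π,Ξ} is self-adjoint if and only if Ξ is self-adjoint (i.e. Ξ = Ξ′). -/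
/-!
STATEMENT 2 (Lemma `bt` of the paper).

Setting as in the paper, Section 2 (dual space `h'` identified with `h` via the
duality map): `A` self-adjoint in `H`, `τ : dom A → h` continuous (graph norm),
surjective, with dense kernel, `S := A | ker τ`, `λ₀ ∈ ρ(A) ∩ ℝ`, `G := G_{λ₀}`.
Every `u ∈ dom S*` writes uniquely as `u = u₀ + G φ` with `u₀ ∈ dom A`, `φ ∈ h'`;
`β₀ u := φ`, `β₁ u := τ u₀`.

Given a linear operator `Ξ : dom Ξ ⊆ ran Π' → ran Π`, let
`A_{Π,Ξ} := S* | {u ∈ dom S* : β₀ u ∈ dom Ξ, Π β₁ u = Ξ β₀ u}`.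
Then `A_{Π,Ξ}` is self-adjoint if and only if `Ξ` is self-adjoint (`Ξ = Ξ'`).
-/

open scoped InnerProductSpace
open Filter Topology

section
variable {H : Type*} [NormedAddCommGroup H] [InnerProductSpace ℂ H] [CompleteSpace H]

variable {h : Type*} [NormedAddCommGroup h] [InnerProductSpace ℂ h] [CompleteSpace h]

theorem statement_2
    (A : H →ₗ.[ℂ] H) (hA : IsSelfAdjointPMap A)
    (τ : A.domain →ₗ[ℂ] h)
    (hτcont : ∃ C : ℝ, ∀ u : A.domain, ‖τ u‖ ≤ C * (‖(u : H)‖ + ‖A u‖))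
    (hτsurj : Function.Surjective τ)
    (hkerdense : Dense {x : H | ∃ u : A.domain, (u : H) = x ∧ τ u = 0})
    (lam0 : ℝ) (hlam0 : InResolventSet A (lam0 : ℂ))
    (G : ℂ → h →L[ℂ] H)
    (hG : ∀ (z : ℂ) (R : H →L[ℂ] H), IsResolvent A (starRingEnd ℂ z) R →
      ∀ (φ : h) (x : H) (hx : R x ∈ A.domain),
        ⟪G z φ, x⟫_ℂ = ⟪φ, τ ⟨R x, hx⟩⟫_ℂ)
    -- `S := A | ker τ` and `Sstar = S*`
    (S : H →ₗ.[ℂ] H)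
    (hSdom : ∀ x : H, x ∈ S.domain ↔ ∃ hx : x ∈ A.domain, τ ⟨x, hx⟩ = 0)
    (hSval : ∀ (u : S.domain) (hu : (u : H) ∈ A.domain), S u = A ⟨(u : H), hu⟩)
    (Sstar : H →ₗ.[ℂ] H) (hSstar : IsAdjointOf S Sstar)
    -- the boundary maps `β₀`, `β₁` coming from `u = u₀ + G β₀u`, `β₁ u = τ u₀`
    (β₀ β₁ : Sstar.domain →ₗ[ℂ] h)
    (hβ : ∀ u : Sstar.domain, ∃ hm : (u : H) - G lam0 (β₀ u) ∈ A.domain,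
        τ ⟨(u : H) - G lam0 (β₀ u), hm⟩ = β₁ u)
    -- an orthogonal projection `Π` and an operator `Ξ : dom Ξ ⊆ ran Π' → ran Π`
    (P : h →L[ℂ] h) (hP : IsOrthProjection P)
    (Ξ : h →ₗ.[ℂ] h) (hΞdom : Ξ.domain ≤ LinearMap.range (P : h →ₗ[ℂ] h))
    (hΞran : ∀ φ : Ξ.domain, Ξ φ ∈ LinearMap.range (P : h →ₗ[ℂ] h))
    -- `T := A_{Π,Ξ} = S* | {u ∈ dom S* : β₀ u ∈ dom Ξ, Π β₁ u = Ξ β₀ u}`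
    (T : H →ₗ.[ℂ] H)
    (hTdom : ∀ x : H, x ∈ T.domain ↔ ∃ hx : x ∈ Sstar.domain,
        ∃ hβ₀ : β₀ ⟨x, hx⟩ ∈ Ξ.domain, P (β₁ ⟨x, hx⟩) = Ξ ⟨β₀ ⟨x, hx⟩, hβ₀⟩)
    (hTval : ∀ (u : T.domain) (hu : (u : H) ∈ Sstar.domain),
        T u = Sstar ⟨(u : H), hu⟩) :
    IsSelfAdjointPMap T ↔ IsSelfAdjointIn (LinearMap.range (P : h →ₗ[ℂ] h)) Ξ := by
  obtain ⟨R, hR⟩ := hlam0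
  have hRstar : IsResolvent A (starRingEnd ℂ (lam0 : ℂ)) R := by
    rwa [Complex.conj_ofReal]
  -- the key identity defining `G`
  have KG : ∀ (φ : h) (w : A.domain),
      ⟪G lam0 φ, -(A w) + (lam0 : ℂ) • (w : H)⟫_ℂ = ⟪φ, τ w⟫_ℂ := by
    intro φ w
    have hRx : R (-(A w) + (lam0 : ℂ) • (w : H)) = (w : H) := hR.2.2 w
    have hx : R (-(A w) + (lam0 : ℂ) • (w : H)) ∈ A.domain := by
      rw [hRx]; exact w.2
    have hgw := hG lam0 R hRstar φ _ hx
    rw [hgw]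
    have : (⟨R (-(A w) + (lam0 : ℂ) • (w : H)), hx⟩ : A.domain) = w := Subtype.ext hRx
    rw [this]
  have Asym := hA.2.1
  -- uniqueness: if `G lam0 φ ∈ dom A` then `φ = 0`
  have Huniq : ∀ (φ : h), G lam0 φ ∈ A.domain → φ = 0 := by
    intro φ hm
    set v : A.domain := ⟨G lam0 φ, hm⟩ with hv
    have hcoe : (v : H) = G lam0 φ := rfl
    have key : ∀ w : A.domain,
        ⟪φ, τ w⟫_ℂ = ⟪-(A v) + (lam0 : ℂ) • (v : H), (w : H)⟫_ℂ := by
      intro w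
      rw [← KG φ w, ← hcoe]
      have hsymm := Asym v w
      simp only [inner_add_left, inner_add_right, inner_neg_left, inner_neg_right,
        inner_smul_left, inner_smul_right, Complex.conj_ofReal]
      linear_combination hsymm
    have hc0 : -(A v) + (lam0 : ℂ) • (v : H) = 0 := by
      have hperp : ∀ x ∈ {x : H | ∃ u : A.domain, (u : H) = x ∧ τ u = 0},
          ⟪-(A v) + (lam0 : ℂ) • (v : H), x⟫_ℂ = 0 := by
        rintro x ⟨u, rfl, hτ0⟩
        rw [← key u, hτ0, inner_zero_right]
      have hfun : (fun y => ⟪-(A v) + (lam0 : ℂ) • (v : H), y⟫_ℂ) = fun _ => 0 :=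
        (continuous_const.inner continuous_id).ext_on hkerdense continuous_const hperp
      have := congr_fun hfun (-(A v) + (lam0 : ℂ) • (v : H))
      simpa [inner_self_eq_zero] using this
    have hv0 : (v : H) = 0 := by
      have h1 := hR.2.2 v
      rw [hc0, map_zero] at h1
      exact h1.symm
    have hφ : ⟪φ, φ⟫_ℂ = 0 := by
      obtain ⟨w, hw⟩ := hτsurj φ
      have h2 : ⟪φ, τ w⟫_ℂ = 0 := by rw [key w, hc0, inner_zero_left]
      rwa [hw] at h2
    exact inner_self_eq_zero.mp hφ
  -- denseness of `dom S`
  have hSseteq : {x : H | ∃ u : A.domain, (u : H) = x ∧ τ u = 0} = (S.domain : Set H) := by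
    ext x
    simp only [Set.mem_setOf_eq, SetLike.mem_coe, hSdom]
    constructor
    · rintro ⟨u, rfl, h0⟩
      exact ⟨u.2, by simpa using h0⟩
    · rintro ⟨hx, h0⟩
      exact ⟨⟨x, hx⟩, rfl, h0⟩
  have Sdense : Dense (S.domain : Set H) := hSseteq ▸ hkerdense
  -- membership criterion for `dom S*`
  have memSstar : ∀ (ψ w : H), (∀ u : S.domain, ⟪ψ, S u⟫_ℂ = ⟪w, (u : H)⟫_ℂ) →
      ∃ hψ : ψ ∈ Sstar.domain, Sstar ⟨ψ, hψ⟩ = w := by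
    intro ψ w hw
    have hψ : ψ ∈ Sstar.domain := (hSstar.1 ψ).2 ⟨w, hw⟩
    refine ⟨hψ, ?_⟩
    refine Sdense.eq_of_inner_left ℂ fun v hv => ?_
    rw [← hSstar.2 ⟨ψ, hψ⟩ ⟨v, hv⟩, hw ⟨v, hv⟩]
  have hSA : ∀ u : S.domain, ∃ hu : (u : H) ∈ A.domain, S u = A ⟨(u : H), hu⟩ := by
    intro u
    obtain ⟨hu, -⟩ := (hSdom u).1 u.2
    exact ⟨hu, hSval u hu⟩
  -- `dom A ⊆ dom S*` with `S* = A` there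
  have memA_star : ∀ v : A.domain, ∃ hv : (v : H) ∈ Sstar.domain,
      Sstar ⟨(v : H), hv⟩ = A v := by
    intro v
    apply memSstar
    intro u
    obtain ⟨hu, hval⟩ := hSA u
    rw [hval]
    exact (Asym v ⟨(u : H), hu⟩).symm
  -- `ran G ⊆ dom S*` with `S* G φ = lam0 • G φ`
  have memG_star : ∀ φ : h, ∃ hg : G lam0 φ ∈ Sstar.domain,
      Sstar ⟨G lam0 φ, hg⟩ = (lam0 : ℂ) • G lam0 φ := by
    intro φ
    apply memSstar
    intro u
    obtain ⟨hu, hval⟩ := hSA u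
    have hτ0 : τ ⟨(u : H), hu⟩ = 0 := by
      obtain ⟨hu', h0⟩ := (hSdom u).1 u.2
      exact h0
    have hk := KG φ ⟨(u : H), hu⟩
    rw [hτ0, inner_zero_right, inner_add_right, inner_neg_right, inner_smul_right] at hk
    rw [hval, inner_smul_left, Complex.conj_ofReal]
    linear_combination -hk
  -- `β₀ (G φ) = φ` and `β₁ (G φ) = 0`
  have beta_G : ∀ (φ : h) (hg : G lam0 φ ∈ Sstar.domain),
      β₀ (⟨G lam0 φ, hg⟩ : Sstar.domain) = φ ∧ β₁ (⟨G lam0 φ, hg⟩ : Sstar.domain) = 0 := by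
    intro φ hg
    obtain ⟨hm, hτ⟩ := hβ ⟨G lam0 φ, hg⟩
    have hGdiff : G lam0 (φ - β₀ (⟨G lam0 φ, hg⟩ : Sstar.domain)) ∈ A.domain := by
      rw [map_sub]; exact hm
    have hφψ := Huniq _ hGdiff
    have hφeq : φ = β₀ (⟨G lam0 φ, hg⟩ : Sstar.domain) := by
      have := sub_eq_zero.mp hφψ; exact this
    refine ⟨hφeq.symm, ?_⟩
    rw [← hτ]
    have hx0 : (⟨(⟨G lam0 φ, hg⟩ : Sstar.domain) - G lam0 (β₀ (⟨G lam0 φ, hg⟩ : Sstar.domain)), hm⟩ :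
        A.domain) = 0 := by
      apply Subtype.ext
      simp [← hφeq]
    rw [hx0]
    exact map_zero τ
  -- `β₀ u₀ = 0` and `β₁ u₀ = τ u₀` for `u₀ ∈ dom A`
  have beta_A : ∀ (v : A.domain) (hv : (v : H) ∈ Sstar.domain),
      β₀ (⟨(v : H), hv⟩ : Sstar.domain) = 0 ∧ β₁ (⟨(v : H), hv⟩ : Sstar.domain) = τ v := by
    intro v hv
    obtain ⟨hm, hτ⟩ := hβ ⟨(v : H), hv⟩
    have hGmem : G lam0 (β₀ (⟨(v : H), hv⟩ : Sstar.domain)) ∈ A.domain := by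
      have := A.domain.sub_mem v.2 hm
      simpa using this
    have hφ0 := Huniq _ hGmem
    refine ⟨hφ0, ?_⟩
    rw [← hτ]
    have hx0 : (⟨(⟨(v : H), hv⟩ : Sstar.domain) - G lam0 (β₀ (⟨(v : H), hv⟩ : Sstar.domain)), hm⟩ :
        A.domain) = v := by
      apply Subtype.ext
      simp [hφ0]
    rw [hx0]
  -- the formula for `S*`
  have Sstar_val : ∀ (u : Sstar.domain) (hm : (u : H) - G lam0 (β₀ u) ∈ A.domain),
      Sstar u = A ⟨(u : H) - G lam0 (β₀ u), hm⟩ + (lam0 : ℂ) • G lam0 (β₀ u) := by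
    intro u hm
    obtain ⟨hv, hvval⟩ := memA_star ⟨(u : H) - G lam0 (β₀ u), hm⟩
    obtain ⟨hg, hgval⟩ := memG_star (β₀ u)
    have hsum : u = (⟨(u : H) - G lam0 (β₀ u), hv⟩ : Sstar.domain) + ⟨G lam0 (β₀ u), hg⟩ := by
      apply Subtype.ext
      show (u : H) = ((u : H) - G lam0 (β₀ u)) + G lam0 (β₀ u)
      abel
    conv_lhs => rw [hsum]
    rw [Sstar.map_add, hgval, hvval]
  -- Green's identity
  have Green : ∀ u v : Sstar.domain,
      ⟪Sstar u, (v : H)⟫_ℂ - ⟪(u : H), Sstar v⟫_ℂ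
        = ⟪β₀ u, β₁ v⟫_ℂ - ⟪β₁ u, β₀ v⟫_ℂ := by
    intro u v
    obtain ⟨hmu, hτu⟩ := hβ u
    obtain ⟨hmv, hτv⟩ := hβ v
    set u₀ : A.domain := ⟨(u : H) - G lam0 (β₀ u), hmu⟩ with hu₀
    set v₀ : A.domain := ⟨(v : H) - G lam0 (β₀ v), hmv⟩ with hv₀
    have e1 : Sstar u = A u₀ + (lam0 : ℂ) • G lam0 (β₀ u) := Sstar_val u hmu
    have e1' : Sstar v = A v₀ + (lam0 : ℂ) • G lam0 (β₀ v) := Sstar_val v hmv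
    have e2 : (u : H) = (u₀ : H) + G lam0 (β₀ u) := by
      show (u : H) = ((u : H) - G lam0 (β₀ u)) + G lam0 (β₀ u)
      abel
    have e2' : (v : H) = (v₀ : H) + G lam0 (β₀ v) := by
      show (v : H) = ((v : H) - G lam0 (β₀ v)) + G lam0 (β₀ v)
      abel
    rw [e1, e1', ← hτu, ← hτv]
    rw [show ⟪(u : H), A v₀ + (lam0 : ℂ) • G lam0 (β₀ v)⟫_ℂ
        = ⟪(u₀ : H) + G lam0 (β₀ u), A v₀ + (lam0 : ℂ) • G lam0 (β₀ v)⟫_ℂ from by rw [← e2]]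
    rw [show ⟪A u₀ + (lam0 : ℂ) • G lam0 (β₀ u), (v : H)⟫_ℂ
        = ⟪A u₀ + (lam0 : ℂ) • G lam0 (β₀ u), (v₀ : H) + G lam0 (β₀ v)⟫_ℂ from by rw [← e2']]
    have K1 := KG (β₀ v) u₀
    have K2 := KG (β₀ u) v₀
    have K1' : ⟪-(A u₀) + (lam0 : ℂ) • (u₀ : H), G lam0 (β₀ v)⟫_ℂ = ⟪τ u₀, β₀ v⟫_ℂ := by
      rw [← inner_conj_symm, K1, inner_conj_symm]
    have hAsym := Asym u₀ v₀
    simp only [inner_add_left, inner_add_right, inner_neg_left, inner_neg_right,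
      inner_smul_left, inner_smul_right, Complex.conj_ofReal] at K1' K2 ⊢
    linear_combination hAsym + K2 - K1'
  -- surjectivity of the joint boundary map
  have mk_elem : ∀ (φ t : h), ∃ u : Sstar.domain, β₀ u = φ ∧ β₁ u = t := by
    intro φ t
    obtain ⟨w, hw⟩ := hτsurj t
    obtain ⟨hv, -⟩ := memA_star w
    obtain ⟨hg, -⟩ := memG_star φ
    refine ⟨⟨(w : H), hv⟩ + ⟨G lam0 φ, hg⟩, ?_, ?_⟩
    · rw [map_add, (beta_A w hv).1, (beta_G φ hg).1, zero_add]
    · rw [map_add, (beta_A w hv).2, (beta_G φ hg).2, add_zero, hw]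
  -- projection facts
  have hPid : ∀ x : h, P (P x) = P x := by
    intro x
    have := congrArg (fun f : h →L[ℂ] h => f x) hP.1
    simpa using this
  have memP_iff : ∀ x : h, x ∈ LinearMap.range (P : h →ₗ[ℂ] h) ↔ P x = x := by
    intro x
    constructor
    · rintro ⟨y, rfl⟩; exact hPid y
    · intro hx; exact ⟨x, hx⟩
  have innerP := hP.2
  -- eta-normal versions of the `T` hypotheses
  have hTdom' : ∀ v : Sstar.domain, ((v : H) ∈ T.domain ↔
      ∃ hβ₀ : β₀ v ∈ Ξ.domain, P (β₁ v) = Ξ ⟨β₀ v, hβ₀⟩) := by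
    intro v
    constructor
    · intro hx
      obtain ⟨hxS, hb, hc⟩ := (hTdom (v : H)).1 hx
      exact ⟨hb, hc⟩
    · rintro ⟨hb, hc⟩
      exact (hTdom (v : H)).2 ⟨v.2, hb, hc⟩
  have hTval' : ∀ (v : Sstar.domain) (hvT : (v : H) ∈ T.domain),
      T ⟨(v : H), hvT⟩ = Sstar v := by
    intro v hvT
    exact hTval ⟨(v : H), hvT⟩ v.2
  -- membership in `dom T` from boundary data
  have mkT : ∀ (φ : Ξ.domain) (v : Sstar.domain), β₀ v = (φ : h) → β₁ v = Ξ φ →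
      (v : H) ∈ T.domain := by
    intro φ v hv0 hv1
    refine (hTdom' v).2 ⟨hv0 ▸ φ.2, ?_⟩
    rw [hv1, (memP_iff _).1 (hΞran φ)]
    congr 1
    exact Subtype.ext hv0.symm
  constructor
  · -- T self-adjoint → Ξ self-adjoint in ran P
    intro hT
    -- the key cancellation: any η ∈ ran P orthogonal to dom Ξ is zero
    have key0 : ∀ η : h, η ∈ LinearMap.range (P : h →ₗ[ℂ] h) → (∀ φ : Ξ.domain, ⟪η, (φ : h)⟫_ℂ = 0) →
        η = 0 := by
      intro η hη hperp
      obtain ⟨w0, hw0⟩ := hτsurj η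
      obtain ⟨hv, hvval⟩ := memA_star w0
      have hcl : ∀ v : T.domain, ⟪(w0 : H), T v⟫_ℂ = ⟪A w0, (v : H)⟫_ℂ := by
        intro v
        obtain ⟨hvS, hβ0, hcon⟩ := (hTdom (v : H)).1 v.2
        rw [hTval v hvS]
        have hGr := Green ⟨(w0 : H), hv⟩ ⟨(v : H), hvS⟩
        rw [hvval, (beta_A w0 hv).1, (beta_A w0 hv).2] at hGr
        have hperp' : ⟪τ w0, β₀ ⟨(v : H), hvS⟩⟫_ℂ = 0 := by
          rw [hw0]; exact hperp ⟨_, hβ0⟩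
        rw [inner_zero_left, hperp'] at hGr
        linear_combination -hGr
      obtain ⟨hmemT, hvalT⟩ := hT.2.2 (w0 : H) (A w0) hcl
      obtain ⟨hvS', hβ0', hcon'⟩ := (hTdom (w0 : H)).1 hmemT
      have h1 := (beta_A w0 hvS').1
      have h2 := (beta_A w0 hvS').2
      have hz : (⟨β₀ (⟨(w0 : H), hvS'⟩ : Sstar.domain), hβ0'⟩ : Ξ.domain) = 0 :=
        Subtype.ext (by simpa using h1)
      rw [hz, Ξ.map_zero, h2, hw0] at hcon'
      rw [← (memP_iff η).1 hη]
      exact hcon'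
    refine ⟨hΞdom, hΞran, ?_, ?_, ?_⟩
    · -- density of dom Ξ in ran P
      intro x hx
      set K := Ξ.domain.topologicalClosure with hK
      have hPcl : IsClosed ((LinearMap.range (P : h →ₗ[ℂ] h) : Submodule ℂ h) : Set h) := by
        have : ((LinearMap.range (P : h →ₗ[ℂ] h) : Submodule ℂ h) : Set h) = {y : h | P y = y} := by
          ext y; simpa using memP_iff y
        rw [this]
        exact isClosed_eq P.continuous continuous_id
      have hKP : K ≤ LinearMap.range (P : h →ₗ[ℂ] h) :=
        Submodule.topologicalClosure_minimal _ hΞdom hPcl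
      haveI : CompleteSpace K := by
        have : IsClosed (K : Set h) := Ξ.domain.isClosed_topologicalClosure
        exact this.completeSpace_coe
      set η := x - (K.orthogonalProjectionOnto x : h) with hηdef
      have hηK : η ∈ Kᗮ := Submodule.sub_starProjection_mem_orthogonal (K := K) x
      have hηP : η ∈ LinearMap.range (P : h →ₗ[ℂ] h) :=
        Submodule.sub_mem _ hx (hKP (K.orthogonalProjectionOnto x).2)
      have hperp : ∀ φ : Ξ.domain, ⟪η, (φ : h)⟫_ℂ = 0 := by
        intro φ
        exact (Submodule.mem_orthogonal' K η).1 hηK _ (Ξ.domain.le_topologicalClosure φ.2)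
      have hη0 : η = 0 := key0 η hηP hperp
      have hxK : x ∈ K := by
        have : x = (K.orthogonalProjectionOnto x : h) := by
          have := sub_eq_zero.mp hη0; exact this
        rw [this]
        exact (K.orthogonalProjectionOnto x).2
      rw [hK, ← SetLike.mem_coe, Submodule.topologicalClosure_coe] at hxK
      exact hxK
    · -- symmetry of Ξ
      intro φ ψ
      obtain ⟨u, hu0, hu1⟩ := mk_elem (φ : h) (Ξ φ)
      obtain ⟨v, hv0, hv1⟩ := mk_elem (ψ : h) (Ξ ψ)
      have huT : (u : H) ∈ T.domain := mkT φ u hu0 hu1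
      have hvT : (v : H) ∈ T.domain := mkT ψ v hv0 hv1
      have hsymT : ⟪Sstar u, (v : H)⟫_ℂ = ⟪(u : H), Sstar v⟫_ℂ := by
        have h9 := hT.2.1 ⟨(u : H), huT⟩ ⟨(v : H), hvT⟩
        rw [hTval' u huT, hTval' v hvT] at h9
        exact h9
      have hGr := Green u v
      rw [hu0, hu1, hv0, hv1] at hGr
      linear_combination hGr - hsymT
    · -- maximality of Ξ
      intro ψ hψ w hw hcond
      obtain ⟨u, hu0, hu1⟩ := mk_elem ψ w
      have hclaim : ∀ v : T.domain, ⟪(u : H), T v⟫_ℂ = ⟪Sstar u, (v : H)⟫_ℂ := by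
        intro v
        obtain ⟨hvS, hβ0v, hconv⟩ := (hTdom (v : H)).1 v.2
        rw [hTval v hvS]
        have hGr := Green u ⟨(v : H), hvS⟩
        rw [hu0, hu1] at hGr
        have h1 : ⟪ψ, β₁ ⟨(v : H), hvS⟩⟫_ℂ = ⟪w, β₀ ⟨(v : H), hvS⟩⟫_ℂ := by
          have hPψ : P ψ = ψ := (memP_iff ψ).1 hψ
          calc ⟪ψ, β₁ ⟨(v : H), hvS⟩⟫_ℂ = ⟪P ψ, β₁ ⟨(v : H), hvS⟩⟫_ℂ := by rw [hPψ]
            _ = ⟪ψ, P (β₁ ⟨(v : H), hvS⟩)⟫_ℂ := innerP _ _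
            _ = ⟪ψ, Ξ ⟨β₀ ⟨(v : H), hvS⟩, hβ0v⟩⟫_ℂ := by rw [hconv]
            _ = ⟪w, β₀ ⟨(v : H), hvS⟩⟫_ℂ := hcond ⟨_, hβ0v⟩
        have hGr' : ⟪Sstar u, (v : H)⟫_ℂ - ⟪(u : H), Sstar ⟨(v : H), hvS⟩⟫_ℂ
            = ⟪ψ, β₁ ⟨(v : H), hvS⟩⟫_ℂ - ⟪w, β₀ ⟨(v : H), hvS⟩⟫_ℂ := hGr
        linear_combination -hGr' - h1
      obtain ⟨hmemT, hvalT⟩ := hT.2.2 (u : H) (Sstar u) hclaim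
      obtain ⟨hβ0', hcon'⟩ := (hTdom' u).1 hmemT
      have hΞval : Ξ ⟨β₀ u, hβ0'⟩ = w := by
        rw [← hcon', hu1, (memP_iff w).1 hw]
      refine ⟨hu0 ▸ hβ0', ?_⟩
      rw [show (⟨ψ, hu0 ▸ hβ0'⟩ : Ξ.domain) = ⟨β₀ u, hβ0'⟩ from Subtype.ext hu0.symm]
      exact hΞval
  · -- Ξ self-adjoint in ran P → T self-adjoint
    rintro ⟨hd1, hd2, hdense, hsym, hmax⟩
    have hsub : (S.domain : Set H) ⊆ (T.domain : Set H) := by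
      intro x hx
      obtain ⟨hxA, hτ0⟩ := (hSdom x).1 hx
      obtain ⟨hvS, -⟩ := memA_star ⟨x, hxA⟩
      have hb := beta_A ⟨x, hxA⟩ hvS
      refine (hTdom' ⟨x, hvS⟩).2 ?_
      rw [hb.1, hb.2, hτ0, map_zero]
      exact ⟨Ξ.domain.zero_mem, (Ξ.map_zero).symm⟩
    refine ⟨Sdense.mono hsub, ?_, ?_⟩
    · -- symmetry of T
      intro u v
      obtain ⟨huS, hβ0u, hconu⟩ := (hTdom (u : H)).1 u.2
      obtain ⟨hvS, hβ0v, hconv⟩ := (hTdom (v : H)).1 v.2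
      rw [hTval u huS, hTval v hvS]
      have hGr := Green ⟨(u : H), huS⟩ ⟨(v : H), hvS⟩
      have hz : ⟪β₀ ⟨(u : H), huS⟩, β₁ ⟨(v : H), hvS⟩⟫_ℂ
          = ⟪β₁ ⟨(u : H), huS⟩, β₀ ⟨(v : H), hvS⟩⟫_ℂ := by
        have hpu : P (β₀ ⟨(u : H), huS⟩) = β₀ ⟨(u : H), huS⟩ := (memP_iff _).1 (hΞdom hβ0u)
        have hpv : P (β₀ ⟨(v : H), hvS⟩) = β₀ ⟨(v : H), hvS⟩ := (memP_iff _).1 (hΞdom hβ0v)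
        calc ⟪β₀ ⟨(u : H), huS⟩, β₁ ⟨(v : H), hvS⟩⟫_ℂ
            = ⟪P (β₀ ⟨(u : H), huS⟩), β₁ ⟨(v : H), hvS⟩⟫_ℂ := by rw [hpu]
          _ = ⟪β₀ ⟨(u : H), huS⟩, P (β₁ ⟨(v : H), hvS⟩)⟫_ℂ := innerP _ _
          _ = ⟪β₀ ⟨(u : H), huS⟩, Ξ ⟨β₀ ⟨(v : H), hvS⟩, hβ0v⟩⟫_ℂ := by rw [hconv]
          _ = ⟪Ξ ⟨β₀ ⟨(u : H), huS⟩, hβ0u⟩, β₀ ⟨(v : H), hvS⟩⟫_ℂ :=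
              (hsym ⟨_, hβ0u⟩ ⟨_, hβ0v⟩).symm
          _ = ⟪P (β₁ ⟨(u : H), huS⟩), β₀ ⟨(v : H), hvS⟩⟫_ℂ := by rw [hconu]
          _ = ⟪β₁ ⟨(u : H), huS⟩, P (β₀ ⟨(v : H), hvS⟩)⟫_ℂ := innerP _ _
          _ = ⟪β₁ ⟨(u : H), huS⟩, β₀ ⟨(v : H), hvS⟩⟫_ℂ := by rw [hpv]
      linear_combination hGr + hz
    · -- maximality of T
      intro ψ w hcl
      have hclS : ∀ u : S.domain, ⟪ψ, S u⟫_ℂ = ⟪w, (u : H)⟫_ℂ := by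
        intro u
        have hxT : (u : H) ∈ T.domain := hsub u.2
        have hTu := hcl ⟨(u : H), hxT⟩
        obtain ⟨huA, hval⟩ := hSA u
        obtain ⟨hvS2, hvval⟩ := memA_star ⟨(u : H), huA⟩
        rw [hTval ⟨(u : H), hxT⟩ hvS2] at hTu
        rw [hval, ← hvval]
        exact hTu
      obtain ⟨hψS, hψval⟩ := memSstar ψ w hclS
      have E : ∀ v : Sstar.domain, (v : H) ∈ T.domain →
          ⟪β₀ (⟨ψ, hψS⟩ : Sstar.domain), β₁ v⟫_ℂ = ⟪β₁ (⟨ψ, hψS⟩ : Sstar.domain), β₀ v⟫_ℂ := by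
        intro v hvT
        have hGr := Green ⟨ψ, hψS⟩ v
        rw [hψval] at hGr
        have h2 : ⟪ψ, Sstar v⟫_ℂ = ⟪w, (v : H)⟫_ℂ := by
          rw [← hTval' v hvT]
          exact hcl ⟨(v : H), hvT⟩
        rw [h2] at hGr
        linear_combination -hGr
      -- Step A : β₀ ψ' ∈ ran P
      have hb0P : P (β₀ (⟨ψ, hψS⟩ : Sstar.domain)) = β₀ (⟨ψ, hψS⟩ : Sstar.domain) := by
        apply ext_inner_right ℂ
        intro y
        obtain ⟨v, hv0, hv1⟩ := mk_elem 0 (y - P y)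
        have hvT : (v : H) ∈ T.domain := by
          refine (hTdom' v).2 ?_
          rw [hv0, hv1, map_sub, hPid, sub_self]
          exact ⟨Ξ.domain.zero_mem, (Ξ.map_zero).symm⟩
        have hE := E v hvT
        rw [hv0, hv1, inner_zero_right, inner_sub_right] at hE
        calc ⟪P (β₀ (⟨ψ, hψS⟩ : Sstar.domain)), y⟫_ℂ
            = ⟪β₀ (⟨ψ, hψS⟩ : Sstar.domain), P y⟫_ℂ := innerP _ _
          _ = ⟪β₀ (⟨ψ, hψS⟩ : Sstar.domain), y⟫_ℂ := by linear_combination -hE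
      -- Step B : the adjoint relation
      have hBB : ∀ φ : Ξ.domain, ⟪β₀ (⟨ψ, hψS⟩ : Sstar.domain), Ξ φ⟫_ℂ
          = ⟪P (β₁ (⟨ψ, hψS⟩ : Sstar.domain)), (φ : h)⟫_ℂ := by
        intro φ
        obtain ⟨v, hv0, hv1⟩ := mk_elem (φ : h) (Ξ φ)
        have hvT : (v : H) ∈ T.domain := mkT φ v hv0 hv1
        have hE := E v hvT
        rw [hv0, hv1] at hE
        have hpφ : P (φ : h) = (φ : h) := (memP_iff _).1 (hd1 φ.2)
        calc ⟪β₀ (⟨ψ, hψS⟩ : Sstar.domain), Ξ φ⟫_ℂ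
            = ⟪β₁ (⟨ψ, hψS⟩ : Sstar.domain), (φ : h)⟫_ℂ := hE
          _ = ⟪β₁ (⟨ψ, hψS⟩ : Sstar.domain), P (φ : h)⟫_ℂ := by rw [hpφ]
          _ = ⟪P (β₁ (⟨ψ, hψS⟩ : Sstar.domain)), (φ : h)⟫_ℂ := (innerP _ _).symm
      obtain ⟨hmem, hval⟩ := hmax (β₀ (⟨ψ, hψS⟩ : Sstar.domain)) ((memP_iff _).2 hb0P)
        (P (β₁ (⟨ψ, hψS⟩ : Sstar.domain))) ⟨_, rfl⟩ hBB
      have hψT : ψ ∈ T.domain := (hTdom' ⟨ψ, hψS⟩).2 ⟨hmem, hval.symm⟩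
      refine ⟨hψT, ?_⟩
      rw [hTval ⟨ψ, hψT⟩ hψS]
      exact hψval



end
end
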